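/- arXiv:2308.01024 — 10 statements merged into one kernel-verified Lean document; each statement's English description precedes it below -/
import Mathlib

section
/- Let k ≥ 1 and let s be a spin vector of length k. Then the Hamiltonian H_1(s) = (1/2)·((k−2) + Σ_{i=0}^{k−1} s_i)^2 (a rational number) satisfies H_1(s) ≥ 0, and H_1(s) = 0 if and only if s is a spin one-hot vector, i.e., there is exactly one index i with s_i = +1 and all other entries equal −1. -/
/-!
Each spin contributes `2·[sᵢ = 1] - 1`, so `Σ sᵢ = 2m - k` where `m` is the number of `+1`
entries. Hence `(k - 2) + Σ sᵢ = 2(m - 1)` and `H₁(s) = 2(m - 1)²`, a square that vanishes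
exactly when `m = 1`.
-/

open Finset

theorem Finset.sum_eq_two_mul_card_filter_eq_one_sub_card {ι : Type*} (t : Finset ι)
    (s : ι → ℤ) (hs : ∀ i ∈ t, s i = -1 ∨ s i = 1) :
    ∑ i ∈ t, s i = 2 * #{i ∈ t | s i = 1} - #t := by
  calc ∑ i ∈ t, s i = ∑ i ∈ t, (2 * (if s i = 1 then 1 else 0) - 1) := by
        refine sum_congr rfl fun i hi => ?_
        rcases hs i hi with h | h <;> simp [h]
    _ = 2 * #{i ∈ t | s i = 1} - #t := by
        rw [sum_sub_distrib, ← mul_sum, sum_boole, sum_const, nsmul_one]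

theorem Finset.card_filter_eq_one_iff_existsUnique {ι : Type*} (t : Finset ι) (p : ι → Prop)
    [DecidablePred p] : #{i ∈ t | p i} = 1 ↔ ∃! i, i ∈ t ∧ p i := by
  simp only [card_eq_one_iff_existsUnique, mem_filter]

theorem spin_one_hot_hamiltonian_general (k : ℕ) (s : ℕ → ℤ)
    (hs : ∀ i < k, s i = -1 ∨ s i = 1) :
    0 ≤ (1 / 2 : ℚ) * ((k : ℚ) - 2 + ∑ i ∈ Finset.range k, (s i : ℚ)) ^ 2 ∧
    ((1 / 2 : ℚ) * ((k : ℚ) - 2 + ∑ i ∈ Finset.range k, (s i : ℚ)) ^ 2 = 0 ↔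
      ∃! i, i < k ∧ s i = 1) := by
  set m := #{i ∈ range k | s i = 1}
  have hsum : ∑ i ∈ range k, (s i : ℚ) = 2 * m - k := by
    have := sum_eq_two_mul_card_filter_eq_one_sub_card (range k) s
      fun i hi => hs i (mem_range.1 hi)
    rw [card_range] at this
    exact_mod_cast this
  have hH : (1 / 2 : ℚ) * ((k : ℚ) - 2 + ∑ i ∈ range k, (s i : ℚ)) ^ 2 =
      2 * ((m : ℚ) - 1) ^ 2 := by
    rw [hsum]; ring
  rw [hH]
  refine ⟨by positivity, ?_⟩
  have hm : m = 1 ↔ ∃! i, i < k ∧ s i = 1 := by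
    simpa only [mem_range] using card_filter_eq_one_iff_existsUnique (range k) (s · = 1)
  rw [← hm, mul_eq_zero, sq_eq_zero_iff, sub_eq_zero]
  norm_num

/-- The Ising Hamiltonian `H₁(s) = ½((k-2) + Σ sᵢ)²` for a spin vector `s` of length `k`
is nonnegative, and is zero iff `s` is a spin one-hot vector (exactly one entry is +1). -/
theorem spin_one_hot_hamiltonian (k : ℕ) (hk : 1 ≤ k) (s : ℕ → ℤ)
    (hs : ∀ i < k, s i = -1 ∨ s i = 1) :
    0 ≤ (1 / 2 : ℚ) * ((k : ℚ) - 2 + ∑ i ∈ Finset.range k, (s i : ℚ)) ^ 2 ∧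
    ((1 / 2 : ℚ) * ((k : ℚ) - 2 + ∑ i ∈ Finset.range k, (s i : ℚ)) ^ 2 = 0 ↔
      ∃! i, i < k ∧ s i = 1) :=
  spin_one_hot_hamiltonian_general k s hs
end

section
/- Let k ≥ 1 and let s be a spin vector of length k. Then the Hamiltonian H_01(s) = (1/2)·(k + Σ_{i=0}^{k−1} s_i)·((k−2) + Σ_{i=0}^{k−1} s_i) (a rational number) satisfies H_01(s) ≥ 0, and H_01(s) = 0 if and only if s is a spin zero-one-hot vector, i.e., at most one index i has s_i = +1; equivalently, Σ_i s_i equals −k or −(k−2). -/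
/-!
If `m` spins are up, then `∑ sᵢ = 2m - k`, so the Hamiltonian equals `2m(m - 1)`:
it is nonnegative because `m` is a natural number, and it vanishes exactly when `m ≤ 1`.
-/

open Finset

namespace Finset

theorem sum_eq_two_mul_card_filter_eq_one_sub_card_s3 {ι R : Type*} [CommRing R] (t : Finset ι)
    (s : ι → R) [DecidablePred (s · = 1)] (hs : ∀ i ∈ t, s i = -1 ∨ s i = 1) :
    ∑ i ∈ t, s i = 2 * #{i ∈ t | s i = 1} - #t := by
  calc ∑ i ∈ t, s i = ∑ i ∈ t, (2 * (if s i = 1 then 1 else 0) - 1) := by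
        refine sum_congr rfl fun i hi ↦ ?_
        split_ifs with h
        · rw [h]; ring
        · rcases hs i hi with h' | h' <;> simp_all
    _ = _ := by rw [sum_sub_distrib, ← mul_sum, sum_boole, sum_const, nsmul_one]

theorem card_filter_le_one_iff {ι : Type*} (t : Finset ι) (p : ι → Prop) [DecidablePred p] :
    #{i ∈ t | p i} ≤ 1 ↔ ∀ i ∈ t, ∀ j ∈ t, p i → p j → i = j := by
  simp only [card_le_one, mem_filter, and_imp]
  grind

end Finset

theorem Nat.cast_mul_cast_sub_one {R : Type*} [CommRing R] (m : ℕ) :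
    (m : R) * (m - 1) = ((m * (m - 1) : ℕ) : R) := by
  cases m <;> simp

theorem spin_zero_one_hot_hamiltonian_general (k : ℕ) (s : ℕ → ℤ)
    (hs : ∀ i < k, s i = -1 ∨ s i = 1) :
    0 ≤ (1 / 2 : ℚ) * ((k : ℚ) + ∑ i ∈ Finset.range k, (s i : ℚ)) *
        ((k : ℚ) - 2 + ∑ i ∈ Finset.range k, (s i : ℚ)) ∧
    ((1 / 2 : ℚ) * ((k : ℚ) + ∑ i ∈ Finset.range k, (s i : ℚ)) *
        ((k : ℚ) - 2 + ∑ i ∈ Finset.range k, (s i : ℚ)) = 0 ↔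
      ∀ i < k, ∀ j < k, s i = 1 → s j = 1 → i = j) := by
  set m := #{i ∈ range k | s i = 1}
  have hsum : ∑ i ∈ range k, (s i : ℚ) = 2 * m - k := by
    simpa [m] using sum_eq_two_mul_card_filter_eq_one_sub_card_s3 (range k) (fun i ↦ (s i : ℚ))
      (by exact_mod_cast fun i hi ↦ hs i (mem_range.mp hi))
  have hH : (1 / 2 : ℚ) * ((k : ℚ) + ∑ i ∈ range k, (s i : ℚ)) *
      ((k : ℚ) - 2 + ∑ i ∈ range k, (s i : ℚ)) = 2 * ((m * (m - 1) : ℕ) : ℚ) := by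
    rw [hsum, ← Nat.cast_mul_cast_sub_one]; ring
  have hhot : (∀ i < k, ∀ j < k, s i = 1 → s j = 1 → i = j) ↔ m ≤ 1 := by
    simpa using (card_filter_le_one_iff (range k) (s · = 1)).symm
  rw [hH, hhot]
  refine ⟨by positivity, ?_⟩
  simp only [mul_eq_zero, OfNat.ofNat_ne_zero, Nat.cast_eq_zero, false_or]
  omega

/-- The Ising Hamiltonian `H₀₁(s) = ½(k + Σ sᵢ)((k-2) + Σ sᵢ)` for a spin vector `s` of
length `k` is nonnegative, and is zero iff `s` is a spin zero-one-hot vector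
(at most one entry equals +1). -/
theorem spin_zero_one_hot_hamiltonian (k : ℕ) (hk : 1 ≤ k) (s : ℕ → ℤ)
    (hs : ∀ i < k, s i = -1 ∨ s i = 1) :
    0 ≤ (1 / 2 : ℚ) * ((k : ℚ) + ∑ i ∈ Finset.range k, (s i : ℚ)) *
        ((k : ℚ) - 2 + ∑ i ∈ Finset.range k, (s i : ℚ)) ∧
    ((1 / 2 : ℚ) * ((k : ℚ) + ∑ i ∈ Finset.range k, (s i : ℚ)) *
        ((k : ℚ) - 2 + ∑ i ∈ Finset.range k, (s i : ℚ)) = 0 ↔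
      ∀ i < k, ∀ j < k, s i = 1 → s j = 1 → i = j) :=
  spin_zero_one_hot_hamiltonian_general k s hs
end

section
/- Let k ≥ 1 and let x be a binary vector of length k, extended with fixed guard bits x_{−1} = 1 and x_k = 0. Then the energy E_d(x) = (1/2)·Σ_{i=0}^{k} (x_{i−1} − x_i)^2 (a rational number) satisfies E_d(x) ≥ 1/2, and E_d(x) = 1/2 if and only if x is a domain-wall vector. -/
/-- The guard-extended binary vector: index `0` is the guard bit `x₋₁ = 1`,
indices `1,…,k` hold the entries `x₀,…,x_{k-1}`, and index `k+1` is the guard bit `x_k = 0`. -/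
def guardBit (k : ℕ) (x : ℕ → ℤ) (i : ℕ) : ℤ :=
  if i = 0 then 1 else if i ≤ k then x (i - 1) else 0

/-- The QUBO energy `E_d(x) = ½ Σ_{i=0}^{k} (x_{i-1} - x_i)²` (with guard bits
`x₋₁ = 1`, `x_k = 0`) for a binary vector `x` of length `k` is at least `½`, and equals `½`
iff `x` is a domain-wall vector. -/
theorem domain_wall_energy (k : ℕ) (hk : 1 ≤ k) (x : ℕ → ℤ)
    (hx : ∀ i < k, x i = 0 ∨ x i = 1) :
    (1 / 2 : ℚ) ≤ (1 / 2 : ℚ) * ∑ i ∈ Finset.range (k + 1),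
        ((guardBit k x i : ℚ) - (guardBit k x (i + 1) : ℚ)) ^ 2 ∧
    ((1 / 2 : ℚ) * ∑ i ∈ Finset.range (k + 1),
        ((guardBit k x i : ℚ) - (guardBit k x (i + 1) : ℚ)) ^ 2 = 1 / 2 ↔
      ∃ t ≤ k, ∀ i < k, (i < t → x i = 1) ∧ (t ≤ i → x i = 0)) := by
  set f : ℕ → ℚ := fun i => (guardBit k x i : ℚ) with hf
  have hbin : ∀ i, f i = 0 ∨ f i = 1 := by
    intro i
    simp only [hf, guardBit]
    split
    · right; norm_num
    · split
      · rename_i h0 hle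
        rcases hx (i - 1) (by omega) with h | h <;> simp [h]
      · left; norm_num
  have hf0 : f 0 = 1 := by simp [hf, guardBit]
  have hfk : f (k + 1) = 0 := by simp [hf, guardBit]
  have hfx : ∀ j, j < k → f (j + 1) = (x j : ℚ) := by
    intro j hj
    simp [hf, guardBit, Nat.succ_le_of_lt hj]
  have key : ∀ i, f i - f (i + 1) ≤ (f i - f (i + 1)) ^ 2 := by
    intro i
    rcases hbin i with h | h <;> rcases hbin (i + 1) with h' | h' <;>
      rw [h, h'] <;> norm_num
  have htel : ∑ i ∈ Finset.range (k + 1), (f i - f (i + 1)) = 1 := by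
    rw [Finset.sum_range_sub' f, hf0, hfk]; ring
  have hge : 1 ≤ ∑ i ∈ Finset.range (k + 1), (f i - f (i + 1)) ^ 2 := by
    calc (1 : ℚ) = ∑ i ∈ Finset.range (k + 1), (f i - f (i + 1)) := htel.symm
    _ ≤ _ := Finset.sum_le_sum (fun i _ => key i)
  refine ⟨by linarith, ?_, ?_⟩
  · intro heq
    have hsum1 : ∑ i ∈ Finset.range (k + 1), (f i - f (i + 1)) ^ 2 = 1 := by linarith
    have hzero : ∑ i ∈ Finset.range (k + 1),
        ((f i - f (i + 1)) ^ 2 - (f i - f (i + 1))) = 0 := by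
      rw [Finset.sum_sub_distrib, hsum1, htel]; ring
    have heach : ∀ i ∈ Finset.range (k + 1),
        (f i - f (i + 1)) ^ 2 - (f i - f (i + 1)) = 0 :=
      (Finset.sum_eq_zero_iff_of_nonneg (fun i _ => by linarith [key i])).mp hzero
    have hmono : ∀ i ≤ k, f (i + 1) ≤ f i := by
      intro i hi
      have h := heach i (Finset.mem_range.mpr (by omega))
      rcases hbin i with h1 | h1 <;> rcases hbin (i + 1) with h2 | h2 <;>
        rw [h1, h2] at h ⊢ <;> norm_num at h <;> norm_num
    have hchain : ∀ b, b ≤ k + 1 → ∀ a, a ≤ b → f b ≤ f a := by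
      intro b
      induction b with
      | zero => intro _ a ha; interval_cases a; exact le_refl _
      | succ n ih =>
        intro hb a ha
        rcases Nat.eq_or_lt_of_le ha with rfl | h
        · exact le_refl _
        · exact le_trans (hmono n (by omega)) (ih (by omega) a (by omega))
    by_cases h : ∃ i, i < k ∧ x i = 0
    · refine ⟨Nat.find h, le_of_lt (Nat.find_spec h).1, ?_⟩
      intro i hi
      constructor
      · intro hit
        have hm := Nat.find_min h hit
        rcases hx i hi with h0 | h1
        · exact absurd ⟨hi, h0⟩ hm
        · exact h1
      · intro hti
        have hts := Nat.find_spec h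
        have hft : f (Nat.find h + 1) = 0 := by
          rw [hfx _ hts.1, hts.2]; norm_num
        have hle := hchain (i + 1) (by omega) (Nat.find h + 1) (by omega)
        rw [hft] at hle
        have hfi : f (i + 1) = (x i : ℚ) := hfx i hi
        rcases hbin (i + 1) with h0 | h1
        · rw [hfi] at h0; exact_mod_cast h0
        · rw [h1] at hle; norm_num at hle
    · push_neg at h
      refine ⟨k, le_refl k, ?_⟩
      intro i hi
      refine ⟨fun _ => ?_, fun hki => absurd hki (by omega)⟩
      rcases hx i hi with h0 | h1
      · exact absurd h0 (h i hi)
      · exact h1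
  · rintro ⟨t, htk, hdw⟩
    have hfe : ∀ i, f i = if i ≤ t then 1 else 0 := by
      intro i
      simp only [hf, guardBit]
      split
      · rename_i h0; subst h0; rw [if_pos (Nat.zero_le t)]; norm_num
      · rename_i h0
        split
        · rename_i hik
          by_cases hit : i ≤ t
          · rw [if_pos hit]
            have := (hdw (i - 1) (by omega)).1 (by omega)
            rw [this]; norm_num
          · rw [if_neg hit]
            have := (hdw (i - 1) (by omega)).2 (by omega)
            rw [this]; norm_num
        · rename_i hik; rw [if_neg (by omega)]; norm_num
    have hterm : ∀ i, (f i - f (i + 1)) ^ 2 = if i = t then 1 else 0 := by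
      intro i
      rw [hfe i, hfe (i + 1)]
      by_cases hit : i = t
      · subst hit
        rw [if_pos (le_refl i), if_neg (by omega), if_pos rfl]; ring
      · rw [if_neg hit]
        by_cases h2 : i ≤ t
        · rw [if_pos h2, if_pos (by omega)]; ring
        · rw [if_neg h2, if_neg (by omega)]; ring
    have : ∑ i ∈ Finset.range (k + 1), (f i - f (i + 1)) ^ 2 = 1 := by
      rw [Finset.sum_congr rfl (fun i _ => hterm i), Finset.sum_ite_eq' (Finset.range (k + 1)) t]
      rw [if_pos (Finset.mem_range.mpr (by omega))]
    rw [this]; norm_num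
end

section
/- Let k ≥ 1 and let s be a spin vector of length k, extended with fixed guard qubits s_{−1} = +1 and s_k = −1. Then the Hamiltonian H_d(s) = (1/2)·Σ_{i=0}^{k} (s_{i−1} − s_i)^2 (a rational number) satisfies H_d(s) ≥ 2, and H_d(s) = 2 if and only if s is a spin domain-wall vector. -/
/-- The guard-extended spin vector: index `0` is the guard qubit `s₋₁ = +1`,
indices `1,…,k` hold the entries `s₀,…,s_{k-1}`, and index `k+1` is the guard qubit
`s_k = -1`. -/
def guardSpin (k : ℕ) (s : ℕ → ℤ) (i : ℕ) : ℤ :=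
  if i = 0 then 1 else if i ≤ k then s (i - 1) else -1

/-- The Ising Hamiltonian `H_d(s) = ½ Σ_{i=0}^{k} (s_{i-1} - s_i)²` (with guard qubits
`s₋₁ = +1`, `s_k = -1`) for a spin vector `s` of length `k` is at least `2`, and equals `2`
iff `s` is a spin domain-wall vector. -/
theorem spin_domain_wall_hamiltonian (k : ℕ) (hk : 1 ≤ k) (s : ℕ → ℤ)
    (hs : ∀ i < k, s i = -1 ∨ s i = 1) :
    (2 : ℚ) ≤ (1 / 2 : ℚ) * ∑ i ∈ Finset.range (k + 1),
        ((guardSpin k s i : ℚ) - (guardSpin k s (i + 1) : ℚ)) ^ 2 ∧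
    ((1 / 2 : ℚ) * ∑ i ∈ Finset.range (k + 1),
        ((guardSpin k s i : ℚ) - (guardSpin k s (i + 1) : ℚ)) ^ 2 = 2 ↔
      ∃ t ≤ k, ∀ i < k, (i < t → s i = 1) ∧ (t ≤ i → s i = -1)) := by
  set g : ℕ → ℚ := fun i => (guardSpin k s i : ℚ) with hgdef
  have hg0 : g 0 = 1 := by simp [hgdef, guardSpin]
  have hgk : g (k + 1) = -1 := by
    simp [hgdef, guardSpin]
  have hgs : ∀ i, 1 ≤ i → i ≤ k → g i = (s (i - 1) : ℚ) := by
    intro i h1 h2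
    have h0 : i ≠ 0 := by omega
    simp [hgdef, guardSpin, h0, h2]
  have hval : ∀ i, g i = 1 ∨ g i = -1 := by
    intro i
    rcases Nat.eq_zero_or_pos i with h0 | hpos
    · left; simp [hgdef, guardSpin, h0]
    · by_cases hik : i ≤ k
      · rw [hgs i hpos hik]
        rcases hs (i - 1) (by omega) with h | h
        · right; rw [h]; norm_num
        · left; rw [h]; norm_num
      · right; simp [hgdef, guardSpin, hik]
        intro h; omega
  have hterm_ge : ∀ i, 2 * (g i - g (i + 1)) ≤ (g i - g (i + 1)) ^ 2 := by
    intro i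
    rcases hval i with h1 | h1 <;> rcases hval (i + 1) with h2 | h2 <;>
      rw [h1, h2] <;> norm_num
  have htel : ∑ i ∈ Finset.range (k + 1), (2 * (g i - g (i + 1))) = 4 := by
    rw [← Finset.mul_sum, Finset.sum_range_sub' g, hg0, hgk]
    norm_num
  have hsum_ge : (4 : ℚ) ≤ ∑ i ∈ Finset.range (k + 1), (g i - g (i + 1)) ^ 2 := by
    rw [← htel]
    exact Finset.sum_le_sum fun i _ => hterm_ge i
  refine ⟨by linarith, ?_, ?_⟩
  · -- equality → domain wall
    intro heq
    have hsum : ∑ i ∈ Finset.range (k + 1), (g i - g (i + 1)) ^ 2 = 4 := by linarith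
    have hzero : ∑ i ∈ Finset.range (k + 1),
        ((g i - g (i + 1)) ^ 2 - 2 * (g i - g (i + 1))) = 0 := by
      rw [Finset.sum_sub_distrib, hsum, htel]; ring
    have hstep : ∀ i ≤ k, g (i + 1) ≤ g i := by
      intro i hi
      have := (Finset.sum_eq_zero_iff_of_nonneg
        (fun j _ => by linarith [hterm_ge j])).mp hzero i
        (Finset.mem_range.mpr (by omega))
      rcases hval i with h1 | h1 <;> rcases hval (i + 1) with h2 | h2 <;>
        rw [h1, h2] at this ⊢ <;> linarith
    have hmono : ∀ j, j ≤ k + 1 → ∀ i ≤ j, g j ≤ g i := by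
      intro j
      induction j with
      | zero =>
        intro _ i hi
        have h0 : i = 0 := by omega
        rw [h0]
      | succ n ih =>
        intro hn i hi
        rcases Nat.lt_or_ge i (n + 1) with h | h
        · exact le_trans (hstep n (by omega)) (ih (by omega) i (by omega))
        · have h' : i = n + 1 := by omega
          rw [h']
    have hex : ∃ i, k ≤ i ∨ s i = -1 := ⟨k, Or.inl le_rfl⟩
    set t := Nat.find hex with htdef
    have htk : t ≤ k := Nat.find_le (Or.inl le_rfl)
    refine ⟨t, htk, fun i hik => ⟨fun hit => ?_, fun hti => ?_⟩⟩
    · have := Nat.find_min hex hit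
      push_neg at this
      rcases hs i hik with h | h
      · exact absurd h this.2
      · exact h
    · have hspec := Nat.find_spec hex
      rcases hspec with h | h
      · omega
      · have htk' : t < k := lt_of_le_of_lt hti hik
        have hgt : g (t + 1) = -1 := by
          rw [hgs (t + 1) (by omega) (by omega)]
          simp [htdef, h]
        have hle : g (i + 1) ≤ g (t + 1) :=
          hmono (i + 1) (by omega) (t + 1) (by omega)
        rw [hgt] at hle
        have hgi : g (i + 1) = (s i : ℚ) := by
          rw [hgs (i + 1) (by omega) (by omega)]; norm_num
        rcases hval (i + 1) with h' | h'
        · rw [h'] at hle; norm_num at hle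
        · rw [hgi] at h'
          exact_mod_cast h'
  · -- domain wall → equality
    rintro ⟨t, htk, hst⟩
    have hgone : ∀ i, i ≤ t → g i = 1 := by
      intro i hi
      rcases Nat.eq_zero_or_pos i with h0 | hpos
      · rw [h0]; exact hg0
      · rw [hgs i hpos (by omega)]
        rw [(hst (i - 1) (by omega)).1 (by omega)]; norm_num
    have hgneg : ∀ i, t < i → g i = -1 := by
      intro i hi
      by_cases hik : i ≤ k
      · rw [hgs i (by omega) hik]
        rw [(hst (i - 1) (by omega)).2 (by omega)]; norm_num
      · simp [hgdef, guardSpin, hik]; intro h; omega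
    have hterm : ∀ i ∈ Finset.range (k + 1),
        (g i - g (i + 1)) ^ 2 = if i = t then 4 else 0 := by
      intro i _
      rcases lt_trichotomy i t with h | h | h
      · rw [hgone i (by omega), hgone (i + 1) (by omega), if_neg (by omega)]
        ring
      · rw [h, hgone t le_rfl, hgneg (t + 1) (by omega), if_pos rfl]
        norm_num
      · rw [hgneg i h, hgneg (i + 1) (by omega), if_neg (by omega)]
        ring
    rw [Finset.sum_congr rfl hterm, Finset.sum_ite_eq' (Finset.range (k + 1)) t fun _ => 4,
      if_pos (Finset.mem_range.mpr (by omega))]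
    norm_num
end

section
/- Let n ≥ 1 and let S = (s_{i,j}) be an n×n spin matrix. Then the Hamiltonian H_1^{nn}(S) = (1/2)·Σ_{i=0}^{n−1} ((n−2) + Σ_{j=0}^{n−1} s_{i,j})^2 + (1/2)·Σ_{j=0}^{n−1} ((n−2) + Σ_{i=0}^{n−1} s_{i,j})^2 (a rational number) satisfies H_1^{nn}(S) ≥ 0, and H_1^{nn}(S) = 0 if and only if every row and every column of S contains exactly one entry equal to +1 (all other entries being −1). -/
/-!
For a row (or column) of spins `±1` with `k` entries equal to `+1`, the sum is `2k - n`, so the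
shifted row sum `(n - 2) + Σ s` equals `2(k - 1)` and vanishes exactly when `k = 1`. The
Hamiltonian is half a sum of squares of these quantities, hence nonnegative, and it vanishes
exactly when every row and every column has a single `+1`.
-/

open Finset

theorem sum_spins_eq {ι : Type*} (s : Finset ι) (f : ι → ℤ)
    (hf : ∀ j ∈ s, f j = -1 ∨ f j = 1) :
    ∑ j ∈ s, f j = 2 * #{j ∈ s | f j = 1} - #s := by
  have hspin : ∀ j ∈ s, f j = 2 * (if f j = 1 then 1 else 0) - 1 := by
    intro j hj
    rcases hf j hj with h | h <;> simp [h]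
  rw [sum_congr rfl hspin, sum_sub_distrib, ← mul_sum, sum_boole, sum_const, nsmul_one]

theorem sum_spins_eq_two_sub_card_iff {ι : Type*} (s : Finset ι) (f : ι → ℤ)
    (hf : ∀ j ∈ s, f j = -1 ∨ f j = 1) :
    ∑ j ∈ s, f j = 2 - #s ↔ #{j ∈ s | f j = 1} = 1 := by
  rw [sum_spins_eq s f hf]
  omega

theorem shifted_sum_spins_eq_zero_iff (n : ℕ) (f : ℕ → ℤ)
    (hf : ∀ j < n, f j = -1 ∨ f j = 1) :
    (n : ℚ) - 2 + ∑ j ∈ range n, (f j : ℚ) = 0 ↔ ∃! j, j < n ∧ f j = 1 := by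
  have hf' : ∀ j ∈ range n, f j = -1 ∨ f j = 1 := fun j hj => hf j (mem_range.mp hj)
  have hcast : (n : ℚ) - 2 + ∑ j ∈ range n, (f j : ℚ) = 0 ↔
      ∑ j ∈ range n, f j = 2 - #(range n) := by
    rw [card_range, ← sub_eq_zero (b := (2 : ℤ) - n), ← Int.cast_inj (α := ℚ)]
    push_cast
    constructor <;> intro h <;> linarith
  rw [hcast, sum_spins_eq_two_sub_card_iff _ f hf', card_eq_one_iff_existsUnique]
  simp only [mem_filter, mem_range]

theorem sum_sq_shifted_row_sums_eq_zero_iff (n : ℕ) (S : ℕ → ℕ → ℤ)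
    (hS : ∀ i < n, ∀ j < n, S i j = -1 ∨ S i j = 1) :
    ∑ i ∈ range n, ((n : ℚ) - 2 + ∑ j ∈ range n, (S i j : ℚ)) ^ 2 = 0 ↔
      ∀ i < n, ∃! j, j < n ∧ S i j = 1 := by
  rw [sum_eq_zero_iff_of_nonneg fun i _ => sq_nonneg _]
  refine forall_congr' fun i => ?_
  rw [mem_range]
  refine forall_congr' fun hi => ?_
  rw [sq_eq_zero_iff, shifted_sum_spins_eq_zero_iff n (S i) (hS i hi)]

theorem permutation_spin_one_hot_hamiltonian_general (n : ℕ) (S : ℕ → ℕ → ℤ)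
    (hS : ∀ i < n, ∀ j < n, S i j = -1 ∨ S i j = 1) :
    0 ≤ (1 / 2 : ℚ) * (∑ i ∈ Finset.range n,
          ((n : ℚ) - 2 + ∑ j ∈ Finset.range n, (S i j : ℚ)) ^ 2) +
        (1 / 2 : ℚ) * (∑ j ∈ Finset.range n,
          ((n : ℚ) - 2 + ∑ i ∈ Finset.range n, (S i j : ℚ)) ^ 2) ∧
    ((1 / 2 : ℚ) * (∑ i ∈ Finset.range n,
          ((n : ℚ) - 2 + ∑ j ∈ Finset.range n, (S i j : ℚ)) ^ 2) +
        (1 / 2 : ℚ) * (∑ j ∈ Finset.range n,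
          ((n : ℚ) - 2 + ∑ i ∈ Finset.range n, (S i j : ℚ)) ^ 2) = 0 ↔
      (∀ i < n, ∃! j, j < n ∧ S i j = 1) ∧ (∀ j < n, ∃! i, i < n ∧ S i j = 1)) := by
  have hST : ∀ j < n, ∀ i < n, S i j = -1 ∨ S i j = 1 := fun j hj i hi => hS i hi j hj
  have hrows := sum_sq_shifted_row_sums_eq_zero_iff n S hS
  have hcols := sum_sq_shifted_row_sums_eq_zero_iff n (fun j i => S i j) hST
  have hrows_nonneg : 0 ≤ (1 / 2 : ℚ) * ∑ i ∈ range n,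
      ((n : ℚ) - 2 + ∑ j ∈ range n, (S i j : ℚ)) ^ 2 := by positivity
  have hcols_nonneg : 0 ≤ (1 / 2 : ℚ) * ∑ j ∈ range n,
      ((n : ℚ) - 2 + ∑ i ∈ range n, (S i j : ℚ)) ^ 2 := by positivity
  refine ⟨add_nonneg hrows_nonneg hcols_nonneg, ?_⟩
  rw [add_eq_zero_iff_of_nonneg hrows_nonneg hcols_nonneg, ← hrows, ← hcols]
  simp only [mul_eq_zero, one_div, inv_eq_zero, OfNat.ofNat_ne_zero, false_or]

/-- The Ising Hamiltonian `H₁ⁿⁿ(S) = ½ Σᵢ ((n-2) + Σⱼ sᵢⱼ)² + ½ Σⱼ ((n-2) + Σᵢ sᵢⱼ)²`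
for an `n × n` spin matrix `S` is nonnegative, and is zero iff every row and every column
of `S` contains exactly one entry equal to `+1`. -/
theorem permutation_spin_one_hot_hamiltonian (n : ℕ) (hn : 1 ≤ n) (S : ℕ → ℕ → ℤ)
    (hS : ∀ i < n, ∀ j < n, S i j = -1 ∨ S i j = 1) :
    0 ≤ (1 / 2 : ℚ) * (∑ i ∈ Finset.range n,
          ((n : ℚ) - 2 + ∑ j ∈ Finset.range n, (S i j : ℚ)) ^ 2) +
        (1 / 2 : ℚ) * (∑ j ∈ Finset.range n,
          ((n : ℚ) - 2 + ∑ i ∈ Finset.range n, (S i j : ℚ)) ^ 2) ∧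
    ((1 / 2 : ℚ) * (∑ i ∈ Finset.range n,
          ((n : ℚ) - 2 + ∑ j ∈ Finset.range n, (S i j : ℚ)) ^ 2) +
        (1 / 2 : ℚ) * (∑ j ∈ Finset.range n,
          ((n : ℚ) - 2 + ∑ i ∈ Finset.range n, (S i j : ℚ)) ^ 2) = 0 ↔
      (∀ i < n, ∃! j, j < n ∧ S i j = 1) ∧ (∀ j < n, ∃! i, i < n ∧ S i j = 1)) :=
  permutation_spin_one_hot_hamiltonian_general n S hS
end

section
/- Let n ≥ 1 and let X = (x_{i,j}) be an n×(n−1) binary matrix, each row extended with fixed guard bits x_{i,−1} = 1 and x_{i,n−1} = 0. Then the energy E_a^{nn}(X) = (1/2)·Σ_{i=0}^{n−1} Σ_{j=0}^{n−1} (x_{i,j−1} − x_{i,j})^2 + Σ_{j=0}^{n−2} ((n−j−1) − Σ_{i=0}^{n−1} x_{i,j})^2 (a rational number) satisfies E_a^{nn}(X) ≥ n/2, and E_a^{nn}(X) = n/2 if and only if every guard-extended row of X is a domain-wall vector and the integers represented by the rows (the number of 1s in each row) are pairwise distinct, i.e., the rows encode a permutation of {0,…,n−1}. -/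
/-- Guard-extended row of an `n × (n-1)` binary matrix: index `0` is the guard bit
`x_{i,-1} = 1`, indices `1,…,n-1` hold the entries `x_{i,0},…,x_{i,n-2}`, and index `n`
is the guard bit `x_{i,n-1} = 0`. -/
def gRow (n : ℕ) (X : ℕ → ℕ → ℤ) (i j : ℕ) : ℤ :=
  if j = 0 then 1 else if j < n then X i (j - 1) else 0

section AuxDW
open Finset
private lemma self_le_sq (d : ℤ) : d ≤ d ^ 2 := by
  rcases le_or_gt d 0 with h | h
  · nlinarith [sq_nonneg d]
  · nlinarith

private lemma gRow_zero (n : ℕ) (X : ℕ → ℕ → ℤ) (i : ℕ) : gRow n X i 0 = 1 := by simp [gRow]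

private lemma gRow_of_ge {n j : ℕ} (hn : 1 ≤ n) (hj : n ≤ j) (X : ℕ → ℕ → ℤ) (i : ℕ) :
    gRow n X i j = 0 := by
  have h0 : j ≠ 0 := by omega
  simp [gRow, h0, Nat.not_lt.mpr hj]

private lemma gRow_succ {n j : ℕ} (hj : j + 1 < n) (X : ℕ → ℕ → ℤ) (i : ℕ) :
    gRow n X i (j + 1) = X i j := by
  simp [gRow, hj]

private lemma gRow_mem {n i : ℕ} {X : ℕ → ℕ → ℤ}
    (hX : ∀ j < n - 1, X i j = 0 ∨ X i j = 1) (j : ℕ) :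
    gRow n X i j = 0 ∨ gRow n X i j = 1 := by
  unfold gRow
  split
  · exact Or.inr rfl
  · split
    · rename_i h1 h2
      exact hX _ (by omega)
    · exact Or.inl rfl

private lemma row_one_le {n : ℕ} (hn : 1 ≤ n) (X : ℕ → ℕ → ℤ) (i : ℕ) :
    1 ≤ ∑ j ∈ range n, (gRow n X i j - gRow n X i (j + 1)) ^ 2 := by
  have h1 : ∑ j ∈ range n, (gRow n X i j - gRow n X i (j + 1)) = 1 := by
    rw [Finset.sum_range_sub' (fun j => gRow n X i j)]
    rw [gRow_zero, gRow_of_ge hn le_rfl]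
    ring
  calc (1 : ℤ) = ∑ j ∈ range n, (gRow n X i j - gRow n X i (j + 1)) := h1.symm
    _ ≤ ∑ j ∈ range n, (gRow n X i j - gRow n X i (j + 1)) ^ 2 :=
      Finset.sum_le_sum fun j _ => self_le_sq _

private lemma row_eq_one_iff {n i : ℕ} {X : ℕ → ℕ → ℤ} (hn : 1 ≤ n)
    (hX : ∀ j < n - 1, X i j = 0 ∨ X i j = 1) :
    (∑ j ∈ range n, (gRow n X i j - gRow n X i (j + 1)) ^ 2 = 1) ↔
      ∀ j, gRow n X i (j + 1) ≤ gRow n X i j := by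
  have h1 : ∑ j ∈ range n, (gRow n X i j - gRow n X i (j + 1)) = 1 := by
    rw [Finset.sum_range_sub' (fun j => gRow n X i j)]
    rw [gRow_zero, gRow_of_ge hn le_rfl]
    ring
  have hsub : ∑ j ∈ range n, ((gRow n X i j - gRow n X i (j + 1)) ^ 2
      - (gRow n X i j - gRow n X i (j + 1)))
      = (∑ j ∈ range n, (gRow n X i j - gRow n X i (j + 1)) ^ 2) - 1 := by
    rw [Finset.sum_sub_distrib, h1]
  have hzero : (∑ j ∈ range n, (gRow n X i j - gRow n X i (j + 1)) ^ 2 = 1) ↔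
      ∀ j ∈ range n, (gRow n X i j - gRow n X i (j + 1)) ^ 2
        = gRow n X i j - gRow n X i (j + 1) := by
    rw [← sub_eq_zero, ← hsub,
      Finset.sum_eq_zero_iff_of_nonneg (fun j _ => sub_nonneg.mpr (self_le_sq _))]
    constructor
    · intro h j hj
      have := h j hj
      linarith
    · intro h j hj
      rw [h j hj]
      ring
  rw [hzero]
  constructor
  · intro h j
    rcases lt_or_ge j n with hj | hj
    · have := h j (mem_range.mpr hj)
      rcases gRow_mem hX j with h0 | h0 <;> rcases gRow_mem hX (j + 1) with h0' | h0' <;>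
        rw [h0, h0'] at this ⊢ <;> norm_num at this <;> norm_num
    · rw [gRow_of_ge hn hj, gRow_of_ge hn (by omega)]
  · intro h j hj
    rcases gRow_mem hX j with h0 | h0 <;> rcases gRow_mem hX (j + 1) with h0' | h0' <;>
      (have := h j) <;> rw [h0, h0'] at this ⊢ <;> norm_num at this <;> norm_num

private lemma mono_iff_dw {n i : ℕ} {X : ℕ → ℕ → ℤ} (hn : 1 ≤ n)
    (hX : ∀ j < n - 1, X i j = 0 ∨ X i j = 1) :
    (∀ j, gRow n X i (j + 1) ≤ gRow n X i j) ↔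
      ∃ t ≤ n - 1, ∀ j < n - 1, (j < t → X i j = 1) ∧ (t ≤ j → X i j = 0) := by
  constructor
  · intro hmono
    have anti : Antitone (gRow n X i) := antitone_nat_of_succ_le hmono
    refine ⟨((range (n - 1)).filter (fun j => X i j = 1)).card,
      (Finset.card_filter_le _ _).trans_eq (card_range _), ?_⟩
    intro j hj
    constructor
    · intro hjt
      rcases hX j hj with h0 | h1
      · exfalso
        have hsub : (range (n - 1)).filter (fun j => X i j = 1) ⊆ range j := by
          intro j' hj'
          rw [mem_filter, mem_range] at hj'
          rw [mem_range]
          by_contra hc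
          have hle : gRow n X i (j' + 1) ≤ gRow n X i (j + 1) := anti (by omega)
          rw [gRow_succ (by omega) X i, gRow_succ (by omega) X i, hj'.2, h0] at hle
          norm_num at hle
        have := (Finset.card_le_card hsub).trans_eq (card_range j)
        omega
      · exact h1
    · intro htj
      rcases hX j hj with h0 | h1
      · exact h0
      · exfalso
        have hsub : range (j + 1) ⊆ (range (n - 1)).filter (fun j => X i j = 1) := by
          intro j' hj'
          rw [mem_range] at hj'
          rw [mem_filter, mem_range]
          refine ⟨by omega, ?_⟩
          have hle : gRow n X i (j + 1) ≤ gRow n X i (j' + 1) := anti (by omega)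
          rw [gRow_succ (by omega) X i, gRow_succ (by omega) X i, h1] at hle
          rcases hX j' (by omega) with h | h
          · rw [h] at hle; norm_num at hle
          · exact h
        have := (card_range (j + 1)).symm.trans_le (Finset.card_le_card hsub)
        omega
  · rintro ⟨t, ht, hdw⟩
    have gval : ∀ j, gRow n X i j = if j ≤ t then 1 else 0 := by
      intro j
      unfold gRow
      rcases Nat.eq_zero_or_pos j with h0 | h0
      · subst h0; simp
      · rcases lt_or_ge j n with hjn | hjn
        · have hj0 : ¬ j = 0 := by omega
          simp only [hj0, if_false, hjn, if_true]
          rcases le_or_gt j t with hle | hlt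
          · rw [(hdw (j - 1) (by omega)).1 (by omega), if_pos hle]
          · rw [(hdw (j - 1) (by omega)).2 (by omega), if_neg (by omega)]
        · have hj0 : ¬ j = 0 := by omega
          simp only [hj0, if_false, Nat.not_lt.mpr hjn, if_false]
          rw [if_neg (by omega)]
    intro j
    rw [gval, gval]
    split_ifs <;> omega

private lemma colsum_eq_card {n j : ℕ} {X : ℕ → ℕ → ℤ}
    (hX : ∀ i < n, ∀ j' < n - 1, X i j' = 0 ∨ X i j' = 1) (hj : j < n - 1) :
    ∑ i ∈ range n, X i j = (((range n).filter (fun i => X i j = 1)).card : ℤ) := by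
  rw [Finset.card_filter]
  push_cast
  refine Finset.sum_congr rfl fun i hi => ?_
  rcases hX i (mem_range.mp hi) j hj with h | h <;> simp [h]

private lemma dw_canonical {n i : ℕ} {X : ℕ → ℕ → ℤ}
    (hdw : ∃ t ≤ n - 1, ∀ j < n - 1, (j < t → X i j = 1) ∧ (t ≤ j → X i j = 0)) :
    ∀ j < n - 1,
      (X i j = 1 ↔ j < ((range (n - 1)).filter (fun j' => X i j' = 1)).card) := by
  obtain ⟨t, ht, hdw⟩ := hdw
  have hfil : (range (n - 1)).filter (fun j' => X i j' = 1) = range t := by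
    ext j'
    simp only [mem_filter, mem_range]
    constructor
    · rintro ⟨hj', hx⟩
      by_contra hc
      have := (hdw j' hj').2 (by omega)
      omega
    · intro hj'
      exact ⟨by omega, (hdw j' (by omega)).1 hj'⟩
  rw [hfil, card_range]
  intro j hj
  constructor
  · intro hx
    by_contra hc
    have := (hdw j hj).2 (by omega)
    omega
  · exact fun h => (hdw j hj).1 h

private lemma tval_le {n i : ℕ} {X : ℕ → ℕ → ℤ} :
    ((range (n - 1)).filter (fun j' => X i j' = 1)).card ≤ n - 1 :=
  (Finset.card_filter_le _ _).trans_eq (card_range _)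

private lemma inj_to_cols {n j : ℕ} {X : ℕ → ℕ → ℤ} (hn : 1 ≤ n)
    (hdw : ∀ i < n, ∃ t ≤ n - 1, ∀ j' < n - 1, (j' < t → X i j' = 1) ∧ (t ≤ j' → X i j' = 0))
    (hinj : ∀ i < n, ∀ i' < n,
      ((range (n - 1)).filter (fun j' => X i j' = 1)).card =
        ((range (n - 1)).filter (fun j' => X i' j' = 1)).card → i = i')
    (hj : j < n - 1) :
    ((range n).filter (fun i => X i j = 1)).card = n - 1 - j := by
  set t : ℕ → ℕ := fun i => ((range (n - 1)).filter (fun j' => X i j' = 1)).card with ht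
  have hinjOn : Set.InjOn t (range n) := fun a ha b hb hab =>
    hinj a (mem_range.mp ha) b (mem_range.mp hb) hab
  have himg : (range n).image t = range n := by
    apply Finset.eq_of_subset_of_card_le
    · intro v hv
      rw [mem_image] at hv
      obtain ⟨a, _, rfl⟩ := hv
      rw [mem_range]
      have h2 : t a ≤ n - 1 := tval_le
      omega
    · rw [Finset.card_image_of_injOn hinjOn, card_range]
  have hpred : (range n).filter (fun i => X i j = 1) =
      (range n).filter (fun i => (fun v => j + 1 ≤ v) (t i)) := by
    refine Finset.filter_congr fun i hi => ?_
    have := dw_canonical (hdw i (mem_range.mp hi)) j hj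
    simp only [ht]
    constructor
    · intro h; exact Nat.succ_le_of_lt (this.mp h)
    · intro h; exact this.mpr (Nat.lt_of_succ_le h)
  rw [hpred]
  have hcard : (((range n).image t).filter (fun v => j + 1 ≤ v)).card =
      ((range n).filter (fun i => (fun v => j + 1 ≤ v) (t i))).card := by
    rw [Finset.filter_image]
    exact Finset.card_image_of_injOn (hinjOn.mono
      (Finset.coe_subset.mpr (Finset.filter_subset _ _)))
  rw [← hcard, himg]
  have : (range n).filter (fun v => j + 1 ≤ v) = Finset.Ico (j + 1) n := by
    ext v
    simp only [mem_filter, mem_range, Finset.mem_Ico]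
    omega
  rw [this, Nat.card_Ico]
  omega

private lemma cols_to_inj {n : ℕ} {X : ℕ → ℕ → ℤ} (hn : 1 ≤ n)
    (hdw : ∀ i < n, ∃ t ≤ n - 1, ∀ j' < n - 1, (j' < t → X i j' = 1) ∧ (t ≤ j' → X i j' = 0))
    (hcols : ∀ j < n - 1, ((range n).filter (fun i => X i j = 1)).card = n - 1 - j) :
    ∀ i < n, ∀ i' < n,
      ((range (n - 1)).filter (fun j' => X i j' = 1)).card =
        ((range (n - 1)).filter (fun j' => X i' j' = 1)).card → i = i' := by
  set t : ℕ → ℕ := fun i => ((range (n - 1)).filter (fun j' => X i j' = 1)).card with ht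
  have hAcard : ∀ v ≤ n, ((range n).filter (fun i => v ≤ t i)).card = n - v := by
    intro v hv
    rcases Nat.eq_zero_or_pos v with rfl | hv0
    · simp
    · rcases eq_or_lt_of_le hv with rfl | hvn
      · have : (range v).filter (fun i => v ≤ t i) = ∅ := by
          apply Finset.filter_false_of_mem
          intro i hi
          have h2 : t i ≤ v - 1 := tval_le
          omega
        rw [this]
        simp
      · have hveq : (range n).filter (fun i => v ≤ t i) =
            (range n).filter (fun i => X i (v - 1) = 1) := by
          refine (Finset.filter_congr fun i hi => ?_).symm
          have := dw_canonical (hdw i (mem_range.mp hi)) (v - 1) (by omega)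
          simp only [ht]
          constructor
          · intro h
            have := this.mp h
            omega
          · intro h
            apply this.mpr
            omega
        rw [hveq, hcols (v - 1) (by omega)]
        omega
  intro i hi i' hi' heq
  set v := t i with hv
  have hvle : v ≤ n - 1 := tval_le
  have hfib : (range n).filter (fun i'' => t i'' = v) =
      (range n).filter (fun i'' => v ≤ t i'') \ (range n).filter (fun i'' => v + 1 ≤ t i'') := by
    ext a
    simp only [mem_filter, Finset.mem_sdiff, mem_range]
    omega
  have hsub : (range n).filter (fun i'' => v + 1 ≤ t i'') ⊆
      (range n).filter (fun i'' => v ≤ t i'') := by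
    apply Finset.monotone_filter_right
    intro a ha
    omega
  have hcard1 : ((range n).filter (fun i'' => t i'' = v)).card = 1 := by
    rw [hfib, Finset.card_sdiff_of_subset hsub, hAcard v (by omega), hAcard (v + 1) (by omega)]
    omega
  have hmem : i ∈ (range n).filter (fun i'' => t i'' = v) := by
    rw [mem_filter, mem_range]; exact ⟨hi, rfl⟩
  have hmem' : i' ∈ (range n).filter (fun i'' => t i'' = v) := by
    rw [mem_filter, mem_range]; exact ⟨hi', heq.symm⟩
  exact Finset.card_le_one.mp (le_of_eq hcard1) i hmem i' hmem'

private lemma sum_eq_card_iff {s : Finset ℕ} {f : ℕ → ℤ} (hf : ∀ i ∈ s, 1 ≤ f i) :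
    ∑ i ∈ s, f i = (s.card : ℤ) ↔ ∀ i ∈ s, f i = 1 := by
  have h : ∑ i ∈ s, (f i - 1) = ∑ i ∈ s, f i - (s.card : ℤ) := by
    rw [Finset.sum_sub_distrib]
    simp
  constructor
  · intro he i hi
    have h0 : ∑ i ∈ s, (f i - 1) = 0 := by rw [h, he]; ring
    have := (Finset.sum_eq_zero_iff_of_nonneg fun i hi => by linarith [hf i hi]).mp h0 i hi
    linarith
  · intro he
    rw [Finset.sum_congr rfl he]
    simp

end AuxDW

/-- The all-different domain-wall QUBO energy
`E_aⁿⁿ(X) = ½ ΣᵢΣⱼ (x_{i,j-1} - x_{i,j})² + Σ_{j=0}^{n-2} ((n-j-1) - Σᵢ x_{i,j})²` for an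
`n × (n-1)` binary matrix `X` (rows extended with guard bits) is at least `n/2`, and equals
`n/2` iff every guard-extended row is a domain-wall vector and the integers represented by
the rows (the number of `1`s in each row) are pairwise distinct. -/
theorem all_different_domain_wall_energy (n : ℕ) (hn : 1 ≤ n) (X : ℕ → ℕ → ℤ)
    (hX : ∀ i < n, ∀ j < n - 1, X i j = 0 ∨ X i j = 1) :
    (n / 2 : ℚ) ≤ (1 / 2 : ℚ) * (∑ i ∈ Finset.range n, ∑ j ∈ Finset.range n,
          ((gRow n X i j : ℚ) - (gRow n X i (j + 1) : ℚ)) ^ 2) +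
        ∑ j ∈ Finset.range (n - 1),
          ((n : ℚ) - (j : ℚ) - 1 - ∑ i ∈ Finset.range n, (X i j : ℚ)) ^ 2 ∧
    ((1 / 2 : ℚ) * (∑ i ∈ Finset.range n, ∑ j ∈ Finset.range n,
          ((gRow n X i j : ℚ) - (gRow n X i (j + 1) : ℚ)) ^ 2) +
        ∑ j ∈ Finset.range (n - 1),
          ((n : ℚ) - (j : ℚ) - 1 - ∑ i ∈ Finset.range n, (X i j : ℚ)) ^ 2 = n / 2 ↔
      (∀ i < n, ∃ t ≤ n - 1, ∀ j < n - 1, (j < t → X i j = 1) ∧ (t ≤ j → X i j = 0)) ∧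
      (∀ i < n, ∀ i' < n,
        ((Finset.range (n - 1)).filter (fun j => X i j = 1)).card =
          ((Finset.range (n - 1)).filter (fun j => X i' j = 1)).card → i = i')) := by
  have hE1ge : (n : ℤ) ≤ ∑ i ∈ Finset.range n, ∑ j ∈ Finset.range n,
      (gRow n X i j - gRow n X i (j + 1)) ^ 2 := by
    calc (n : ℤ) = ∑ _i ∈ Finset.range n, (1 : ℤ) := by simp
      _ ≤ _ := Finset.sum_le_sum fun i _ => row_one_le hn X i
  have hE2ge : (0 : ℤ) ≤ ∑ j ∈ Finset.range (n - 1),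
      ((n : ℤ) - (j : ℤ) - 1 - ∑ i ∈ Finset.range n, X i j) ^ 2 :=
    Finset.sum_nonneg fun _ _ => sq_nonneg _
  have hE1iff : (∑ i ∈ Finset.range n, ∑ j ∈ Finset.range n,
        (gRow n X i j - gRow n X i (j + 1)) ^ 2 = (n : ℤ)) ↔
      ∀ i < n, ∃ t ≤ n - 1, ∀ j < n - 1, (j < t → X i j = 1) ∧ (t ≤ j → X i j = 0) := by
    have hiff := sum_eq_card_iff (s := Finset.range n)
      (f := fun i => ∑ j ∈ Finset.range n, (gRow n X i j - gRow n X i (j + 1)) ^ 2)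
      (fun i _ => row_one_le hn X i)
    rw [Finset.card_range] at hiff
    rw [hiff]
    constructor
    · intro h i hi
      exact (mono_iff_dw hn (hX i hi)).mp
        ((row_eq_one_iff hn (hX i hi)).mp (h i (Finset.mem_range.mpr hi)))
    · intro h i hi
      rw [Finset.mem_range] at hi
      exact (row_eq_one_iff hn (hX i hi)).mpr ((mono_iff_dw hn (hX i hi)).mpr (h i hi))
  have hE2iff : (∑ j ∈ Finset.range (n - 1),
        ((n : ℤ) - (j : ℤ) - 1 - ∑ i ∈ Finset.range n, X i j) ^ 2 = 0) ↔
      ∀ j < n - 1,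
        ((Finset.range n).filter (fun i => X i j = 1)).card = n - 1 - j := by
    rw [Finset.sum_eq_zero_iff_of_nonneg (fun j _ => sq_nonneg _)]
    constructor
    · intro h j hj
      have h0 := h j (Finset.mem_range.mpr hj)
      rw [colsum_eq_card hX hj] at h0
      have h1 : (n : ℤ) - (j : ℤ) - 1
          - (((Finset.range n).filter (fun i => X i j = 1)).card : ℤ) = 0 :=
        (pow_eq_zero_iff (by norm_num)).mp h0
      omega
    · intro h j hj
      rw [Finset.mem_range] at hj
      rw [colsum_eq_card hX hj, h j hj]
      have h2 : ((n - 1 - j : ℕ) : ℤ) = (n : ℤ) - (j : ℤ) - 1 := by omega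
      rw [h2]
      ring
  have hcast : (1 / 2 : ℚ) * (∑ i ∈ Finset.range n, ∑ j ∈ Finset.range n,
          ((gRow n X i j : ℚ) - (gRow n X i (j + 1) : ℚ)) ^ 2) +
        ∑ j ∈ Finset.range (n - 1),
          ((n : ℚ) - (j : ℚ) - 1 - ∑ i ∈ Finset.range n, (X i j : ℚ)) ^ 2
      = ((∑ i ∈ Finset.range n, ∑ j ∈ Finset.range n,
          (gRow n X i j - gRow n X i (j + 1)) ^ 2 : ℤ) : ℚ) / 2
        + ((∑ j ∈ Finset.range (n - 1),
          ((n : ℤ) - (j : ℤ) - 1 - ∑ i ∈ Finset.range n, X i j) ^ 2 : ℤ) : ℚ) := by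
    push_cast
    ring
  set E1 : ℤ := ∑ i ∈ Finset.range n, ∑ j ∈ Finset.range n,
      (gRow n X i j - gRow n X i (j + 1)) ^ 2 with hE1def
  set E2 : ℤ := ∑ j ∈ Finset.range (n - 1),
      ((n : ℤ) - (j : ℤ) - 1 - ∑ i ∈ Finset.range n, X i j) ^ 2 with hE2def
  rw [hcast]
  constructor
  · have h1 : (n : ℚ) ≤ (E1 : ℚ) := by exact_mod_cast hE1ge
    have h2 : (0 : ℚ) ≤ (E2 : ℚ) := by exact_mod_cast hE2ge
    linarith
  · constructor
    · intro heq
      have hz : E1 + 2 * E2 = (n : ℤ) := by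
        have h3 : (E1 : ℚ) + 2 * (E2 : ℚ) = (n : ℚ) := by linarith
        exact_mod_cast h3
      have e1 : E1 = (n : ℤ) := by omega
      have e2 : E2 = 0 := by omega
      exact ⟨hE1iff.mp e1, cols_to_inj hn (hE1iff.mp e1) (hE2iff.mp e2)⟩
    · rintro ⟨hdw, hinj⟩
      have e1 : E1 = (n : ℤ) := hE1iff.mpr hdw
      have e2 : E2 = 0 := hE2iff.mpr (fun j hj => inj_to_cols hn hdw hinj hj)
      rw [e1, e2]
      push_cast
      ring
end

section
/- Let n ≥ 1 and let S = (s_{i,j}) be an n×(n−1) spin matrix, each row extended with fixed guard qubits s_{i,−1} = +1 and s_{i,n−1} = −1. Then the Hamiltonian H_a^{nn}(S) = (1/2)·Σ_{i=0}^{n−1} Σ_{j=0}^{n−1} (s_{i,j−1} − s_{i,j})^2 + (1/2)·Σ_{j=0}^{n−2} ((n−2j−2) − Σ_{i=0}^{n−1} s_{i,j})^2 (a rational number) satisfies H_a^{nn}(S) ≥ 2n, and H_a^{nn}(S) = 2n if and only if every guard-extended row of S is a spin domain-wall vector and the integers represented by the rows (the number of +1s in each row) are pairwise distinct, i.e.,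 the rows encode a permutation of {0,…,n−1}. -/
/-- Guard-extended row of an `n × (n-1)` spin matrix: index `0` is the guard qubit
`s_{i,-1} = +1`, indices `1,…,n-1` hold the entries `s_{i,0},…,s_{i,n-2}`, and index `n`
is the guard qubit `s_{i,n-1} = -1`. -/
def gRowSpin (n : ℕ) (S : ℕ → ℕ → ℤ) (i j : ℕ) : ℤ :=
  if j = 0 then 1 else if j < n then S i (j - 1) else -1

private lemma pm_sq_le (a b : ℚ) (ha : a = 1 ∨ a = -1) (hb : b = 1 ∨ b = -1) :
    2 * (a - b) ≤ (a - b) ^ 2 := by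
  rcases ha with h | h <;> rcases hb with h' | h' <;> subst h <;> subst h' <;> norm_num

private lemma pm_sq_eq (a b : ℚ) (ha : a = 1 ∨ a = -1) (hb : b = 1 ∨ b = -1) :
    (a - b) ^ 2 = 2 * (a - b) ↔ ¬(a = -1 ∧ b = 1) := by
  rcases ha with h | h <;> rcases hb with h' | h' <;> subst h <;> subst h' <;> norm_num

private lemma dw_of_mono (m : ℕ) (f : ℕ → ℤ)
    (hpm : ∀ j < m, f j = -1 ∨ f j = 1)
    (hmono : ∀ j, j + 1 < m → ¬(f j = -1 ∧ f (j + 1) = 1)) :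
    ∀ j < m, (j < ((Finset.range m).filter (fun j => f j = 1)).card → f j = 1) ∧
      (((Finset.range m).filter (fun j => f j = 1)).card ≤ j → f j = -1) := by
  have hdown : ∀ d j, j + d < m → f (j + d) = 1 → f j = 1 := by
    intro d
    induction d with
    | zero => intro j h h1; simpa using h1
    | succ d ih =>
      intro j h h1
      have h2 : f (j + d) = 1 := by
        rcases hpm (j + d) (by omega) with h3 | h3
        · exact absurd ⟨h3, by simpa [← Nat.add_assoc] using h1⟩ (hmono (j + d) (by omega))
        · exact h3
      exact ih j (by omega) h2
  have claim1 : ∀ j < m, f j = 1 → j + 1 ≤ ((Finset.range m).filter (fun j => f j = 1)).card := by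
    intro j hj h1
    have hsub : Finset.range (j + 1) ⊆ (Finset.range m).filter (fun j => f j = 1) := by
      intro k hk
      simp only [Finset.mem_range] at hk
      simp only [Finset.mem_filter, Finset.mem_range]
      refine ⟨by omega, ?_⟩
      exact hdown (j - k) k (by omega) (by rw [show k + (j - k) = j by omega]; exact h1)
    have h2 := Finset.card_le_card hsub
    rwa [Finset.card_range] at h2
  have claim2 : ∀ j < m, f j = -1 → ((Finset.range m).filter (fun j => f j = 1)).card ≤ j := by
    intro j hj h1
    have hsub : (Finset.range m).filter (fun j => f j = 1) ⊆ Finset.range j := by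
      intro k hk
      simp only [Finset.mem_filter, Finset.mem_range] at hk
      simp only [Finset.mem_range]
      by_contra hkj
      have := hdown (k - j) j (by omega) (by rw [show j + (k - j) = k by omega]; exact hk.2)
      omega
    have h2 := Finset.card_le_card hsub
    rwa [Finset.card_range] at h2
  intro j hj
  constructor
  · intro hjt
    rcases hpm j hj with h | h
    · have := claim2 j hj h; omega
    · exact h
  · intro htj
    rcases hpm j hj with h | h
    · exact h
    · have := claim1 j hj h; omega

private lemma card_of_dw (m t : ℕ) (f : ℕ → ℤ) (htm : t ≤ m)
    (h : ∀ j < m, (j < t → f j = 1) ∧ (t ≤ j → f j = -1)) :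
    ((Finset.range m).filter (fun j => f j = 1)).card = t := by
  have he : (Finset.range m).filter (fun j => f j = 1) = Finset.range t := by
    ext k
    simp only [Finset.mem_filter, Finset.mem_range]
    constructor
    · rintro ⟨hk, h1⟩
      by_contra hkt
      have := (h k hk).2 (by omega)
      omega
    · intro hk
      exact ⟨by omega, (h k (by omega)).1 hk⟩
  rw [he, Finset.card_range]

private lemma count_of_inj (n : ℕ) (T : ℕ → ℕ) (hT : ∀ i < n, T i < n)
    (hinj : ∀ i < n, ∀ i' < n, T i = T i' → i = i') :
    ∀ j < n, ((Finset.range n).filter (fun i => T i ≤ j)).card = j + 1 := by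
  intro j hj
  have hio : Set.InjOn T (Finset.range n) := by
    intro a ha b hb hab
    simp only [Finset.coe_range, Set.mem_Iio] at ha hb
    exact hinj a ha b hb hab
  have himg : (Finset.range n).image T = Finset.range n := by
    apply Finset.eq_of_subset_of_card_le
    · intro v hv
      simp only [Finset.mem_image] at hv
      obtain ⟨i, hi, rfl⟩ := hv
      simp only [Finset.mem_range] at hi ⊢
      exact hT i hi
    · rw [Finset.card_image_of_injOn hio, Finset.card_range]
  have key : ((Finset.range n).filter (fun i => T i ≤ j)).image T
      = (Finset.range n).filter (fun v => v ≤ j) := by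
    conv_rhs => rw [← himg, Finset.filter_image]
  have hio2 : Set.InjOn T ((Finset.range n).filter (fun i => T i ≤ j)) :=
    hio.mono (by exact_mod_cast Finset.filter_subset _ _)
  have hcard : ((Finset.range n).filter (fun i => T i ≤ j)).card
      = ((Finset.range n).filter (fun v => v ≤ j)).card := by
    rw [← key, Finset.card_image_of_injOn hio2]
  rw [hcard]
  have he : (Finset.range n).filter (fun v => v ≤ j) = Finset.range (j + 1) := by
    ext k; simp only [Finset.mem_filter, Finset.mem_range]; omega
  rw [he, Finset.card_range]

private lemma inj_of_count (n : ℕ) (T : ℕ → ℕ) (hT : ∀ i < n, T i < n)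
    (hc : ∀ j, j + 1 < n → ((Finset.range n).filter (fun i => T i ≤ j)).card = j + 1) :
    ∀ i < n, ∀ i' < n, T i = T i' → i = i' := by
  have hc' : ∀ j < n, ((Finset.range n).filter (fun i => T i ≤ j)).card = j + 1 := by
    intro j hj
    rcases Nat.lt_or_ge (j + 1) n with h | h
    · exact hc j h
    · have he : (Finset.range n).filter (fun i => T i ≤ j) = Finset.range n := by
        apply Finset.filter_true_of_mem
        intro i hi
        simp only [Finset.mem_range] at hi
        have := hT i hi; omega
      rw [he, Finset.card_range]; omega
  intro i hi i' hi' heq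
  by_contra hne
  have htn : T i < n := hT i hi
  rcases Nat.eq_zero_or_pos (T i) with h0 | hpos
  · have hsub : ({i, i'} : Finset ℕ) ⊆ (Finset.range n).filter (fun k => T k ≤ 0) := by
      intro k hk
      simp only [Finset.mem_insert, Finset.mem_singleton] at hk
      rcases hk with rfl | rfl <;> simp only [Finset.mem_filter, Finset.mem_range] <;> omega
    have h2 : ({i, i'} : Finset ℕ).card = 2 := Finset.card_pair hne
    have h3 := Finset.card_le_card hsub
    rw [hc' 0 (by omega), h2] at h3
    omega
  · obtain ⟨k, hk⟩ : ∃ k, T i = k + 1 := ⟨T i - 1, by omega⟩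
    have hiB : i ∉ (Finset.range n).filter (fun x => T x ≤ k) := by
      simp only [Finset.mem_filter, Finset.mem_range, not_and]; intro; omega
    have hiB' : i' ∉ insert i' ((Finset.range n).filter (fun x => T x ≤ k)) → False := by
      intro h; exact h (Finset.mem_insert_self _ _)
    have hinsert : insert i (insert i' ((Finset.range n).filter (fun x => T x ≤ k)))
        ⊆ (Finset.range n).filter (fun x => T x ≤ k + 1) := by
      intro x hx
      simp only [Finset.mem_insert, Finset.mem_filter, Finset.mem_range] at hx ⊢
      rcases hx with rfl | rfl | ⟨h1, h2⟩ <;> omega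
    have hcard1 : (insert i (insert i' ((Finset.range n).filter (fun x => T x ≤ k)))).card
        = ((Finset.range n).filter (fun x => T x ≤ k)).card + 2 := by
      rw [Finset.card_insert_of_notMem, Finset.card_insert_of_notMem]
      · simp only [Finset.mem_filter, Finset.mem_range, not_and]; intro; omega
      · simp only [Finset.mem_insert, Finset.mem_filter, Finset.mem_range, not_or, not_and]
        exact ⟨hne, fun _ => by omega⟩
    have hle := Finset.card_le_card hinsert
    rw [hcard1, hc' k (by omega), hc' (k + 1) (by omega)] at hle
    omega

private lemma col_sum (n : ℕ) (S : ℕ → ℕ → ℤ) (T : ℕ → ℕ) (j : ℕ)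
    (hDW : ∀ i < n, (T i ≤ j → S i j = -1) ∧ (j < T i → S i j = 1)) :
    ∑ i ∈ Finset.range n, (S i j : ℚ)
      = n - 2 * (((Finset.range n).filter (fun i => T i ≤ j)).card : ℚ) := by
  have h : ∀ i ∈ Finset.range n, (S i j : ℚ)
      = 1 - 2 * (if T i ≤ j then (1 : ℚ) else 0) := by
    intro i hi
    simp only [Finset.mem_range] at hi
    by_cases h : T i ≤ j
    · rw [if_pos h]
      have := (hDW i hi).1 h
      rw [this]; norm_num
    · rw [if_neg h]
      have := (hDW i hi).2 (by omega)
      rw [this]; norm_num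
  rw [Finset.sum_congr rfl h, Finset.sum_sub_distrib, ← Finset.mul_sum, Finset.sum_boole,
    Finset.sum_const, Finset.card_range]
  simp


/-- The all-different domain-wall Ising Hamiltonian
`H_aⁿⁿ(S) = ½ ΣᵢΣⱼ (s_{i,j-1} - s_{i,j})² + ½ Σ_{j=0}^{n-2} ((n-2j-2) - Σᵢ s_{i,j})²`
for an `n × (n-1)` spin matrix `S` (rows extended with guard qubits) is at least `2n`,
and equals `2n` iff every guard-extended row is a spin domain-wall vector and the integers
represented by the rows (the number of `+1`s in each row) are pairwise distinct. -/
theorem all_different_domain_wall_hamiltonian (n : ℕ) (hn : 1 ≤ n) (S : ℕ → ℕ → ℤ)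
    (hS : ∀ i < n, ∀ j < n - 1, S i j = -1 ∨ S i j = 1) :
    (2 * n : ℚ) ≤ (1 / 2 : ℚ) * (∑ i ∈ Finset.range n, ∑ j ∈ Finset.range n,
          ((gRowSpin n S i j : ℚ) - (gRowSpin n S i (j + 1) : ℚ)) ^ 2) +
        (1 / 2 : ℚ) * ∑ j ∈ Finset.range (n - 1),
          ((n : ℚ) - 2 * (j : ℚ) - 2 - ∑ i ∈ Finset.range n, (S i j : ℚ)) ^ 2 ∧
    ((1 / 2 : ℚ) * (∑ i ∈ Finset.range n, ∑ j ∈ Finset.range n,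
          ((gRowSpin n S i j : ℚ) - (gRowSpin n S i (j + 1) : ℚ)) ^ 2) +
        (1 / 2 : ℚ) * ∑ j ∈ Finset.range (n - 1),
          ((n : ℚ) - 2 * (j : ℚ) - 2 - ∑ i ∈ Finset.range n, (S i j : ℚ)) ^ 2 = 2 * n ↔
      (∀ i < n, ∃ t ≤ n - 1, ∀ j < n - 1, (j < t → S i j = 1) ∧ (t ≤ j → S i j = -1)) ∧
      (∀ i < n, ∀ i' < n,
        ((Finset.range (n - 1)).filter (fun j => S i j = 1)).card =
          ((Finset.range (n - 1)).filter (fun j => S i' j = 1)).card → i = i')) := by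
  -- basic facts about gRowSpin
  have hg0 : ∀ i, gRowSpin n S i 0 = 1 := fun i => by simp [gRowSpin]
  have hgn : ∀ i, gRowSpin n S i n = -1 := fun i => by
    simp only [gRowSpin]
    rw [if_neg (by omega), if_neg (by omega)]
  have hgmid : ∀ i j, 0 < j → j < n → gRowSpin n S i j = S i (j - 1) := by
    intro i j h1 h2
    simp only [gRowSpin]
    rw [if_neg (by omega), if_pos h2]
  have hgpm : ∀ i < n, ∀ j ≤ n, (gRowSpin n S i j : ℚ) = 1 ∨ (gRowSpin n S i j : ℚ) = -1 := by
    intro i hi j hj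
    rcases Nat.eq_zero_or_pos j with rfl | hj0
    · left; rw [hg0 i]; norm_num
    rcases Nat.lt_or_ge j n with hjn | hjn
    · rw [hgmid i j hj0 hjn]
      rcases hS i hi (j - 1) (by omega) with h | h
      · right; rw [h]; norm_num
      · left; rw [h]; norm_num
    · right
      rw [show j = n by omega, hgn i]; norm_num
  -- termwise lower bound
  have hlow : ∀ i ∈ Finset.range n, ∀ j ∈ Finset.range n,
      2 * ((gRowSpin n S i j : ℚ) - (gRowSpin n S i (j + 1) : ℚ)) ≤
        ((gRowSpin n S i j : ℚ) - (gRowSpin n S i (j + 1) : ℚ)) ^ 2 := by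
    intro i hi j hj
    simp only [Finset.mem_range] at hi hj
    exact pm_sq_le _ _ (hgpm i hi j (by omega)) (hgpm i hi (j + 1) (by omega))
  -- telescoping sum
  have hinner : ∀ i ∈ Finset.range n,
      ∑ j ∈ Finset.range n, 2 * ((gRowSpin n S i j : ℚ) - (gRowSpin n S i (j + 1) : ℚ))
        = 4 := by
    intro i _
    rw [← Finset.mul_sum, Finset.sum_range_sub' (fun j => (gRowSpin n S i j : ℚ)) n]
    rw [hg0 i, hgn i]
    norm_num
  have hlin : ∑ i ∈ Finset.range n, ∑ j ∈ Finset.range n,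
      2 * ((gRowSpin n S i j : ℚ) - (gRowSpin n S i (j + 1) : ℚ)) = 4 * n := by
    rw [Finset.sum_congr rfl hinner, Finset.sum_const, Finset.card_range]
    simp [mul_comm]
  have hFge : (4 * n : ℚ) ≤ ∑ i ∈ Finset.range n, ∑ j ∈ Finset.range n,
      ((gRowSpin n S i j : ℚ) - (gRowSpin n S i (j + 1) : ℚ)) ^ 2 := by
    rw [← hlin]
    exact Finset.sum_le_sum fun i hi => Finset.sum_le_sum (hlow i hi)
  have hGnn : (0 : ℚ) ≤ ∑ j ∈ Finset.range (n - 1),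
      ((n : ℚ) - 2 * (j : ℚ) - 2 - ∑ i ∈ Finset.range n, (S i j : ℚ)) ^ 2 :=
    Finset.sum_nonneg fun _ _ => sq_nonneg _
  refine ⟨by linarith, ?_, ?_⟩
  · -- forward direction
    intro heq
    have hF : ∑ i ∈ Finset.range n, ∑ j ∈ Finset.range n,
        ((gRowSpin n S i j : ℚ) - (gRowSpin n S i (j + 1) : ℚ)) ^ 2 = 4 * n := by
      linarith
    have hG : ∑ j ∈ Finset.range (n - 1),
        ((n : ℚ) - 2 * (j : ℚ) - 2 - ∑ i ∈ Finset.range n, (S i j : ℚ)) ^ 2 = 0 := by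
      linarith
    -- termwise equality in F
    have hzero : ∑ i ∈ Finset.range n, ∑ j ∈ Finset.range n,
        (((gRowSpin n S i j : ℚ) - (gRowSpin n S i (j + 1) : ℚ)) ^ 2
          - 2 * ((gRowSpin n S i j : ℚ) - (gRowSpin n S i (j + 1) : ℚ))) = 0 := by
      have e1 : ∀ i ∈ Finset.range n, ∑ j ∈ Finset.range n,
          (((gRowSpin n S i j : ℚ) - (gRowSpin n S i (j + 1) : ℚ)) ^ 2
            - 2 * ((gRowSpin n S i j : ℚ) - (gRowSpin n S i (j + 1) : ℚ)))
          = (∑ j ∈ Finset.range n, ((gRowSpin n S i j : ℚ) - (gRowSpin n S i (j + 1) : ℚ)) ^ 2)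
            - ∑ j ∈ Finset.range n,
              2 * ((gRowSpin n S i j : ℚ) - (gRowSpin n S i (j + 1) : ℚ)) :=
        fun i _ => Finset.sum_sub_distrib _ _
      rw [Finset.sum_congr rfl e1, Finset.sum_sub_distrib, hF, hlin, sub_self]
    have hterm : ∀ i ∈ Finset.range n, ∀ j ∈ Finset.range n,
        ((gRowSpin n S i j : ℚ) - (gRowSpin n S i (j + 1) : ℚ)) ^ 2
          - 2 * ((gRowSpin n S i j : ℚ) - (gRowSpin n S i (j + 1) : ℚ)) = 0 := by
      intro i hi j hj
      have hnn : ∀ i ∈ Finset.range n, (0:ℚ) ≤ ∑ j ∈ Finset.range n,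
          (((gRowSpin n S i j : ℚ) - (gRowSpin n S i (j + 1) : ℚ)) ^ 2
            - 2 * ((gRowSpin n S i j : ℚ) - (gRowSpin n S i (j + 1) : ℚ))) := by
        intro i hi
        exact Finset.sum_nonneg fun j hj => sub_nonneg.mpr (hlow i hi j hj)
      have h1 := (Finset.sum_eq_zero_iff_of_nonneg hnn).mp hzero i hi
      have h2 := (Finset.sum_eq_zero_iff_of_nonneg
        (fun j hj => sub_nonneg.mpr (hlow i hi j hj))).mp h1 j hj
      exact h2
    have hnodrop : ∀ i < n, ∀ j < n,
        ¬((gRowSpin n S i j : ℚ) = -1 ∧ (gRowSpin n S i (j + 1) : ℚ) = 1) := by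
      intro i hi j hj
      have h := hterm i (Finset.mem_range.mpr hi) j (Finset.mem_range.mpr hj)
      exact (pm_sq_eq _ _ (hgpm i hi j (by omega)) (hgpm i hi (j + 1) (by omega))).mp
        (by linarith)
    -- rows are monotone, hence domain walls
    have hmonoS : ∀ i < n, ∀ k, k + 1 < n - 1 → ¬(S i k = -1 ∧ S i (k + 1) = 1) := by
      rintro i hi k hk ⟨h1, h2⟩
      apply hnodrop i hi (k + 1) (by omega)
      constructor
      · have e : gRowSpin n S i (k + 1) = S i k := by
          rw [hgmid i (k + 1) (by omega) (by omega)]; simp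
        rw [e, h1]; norm_num
      · have e : gRowSpin n S i (k + 2) = S i (k + 1) := by
          rw [hgmid i (k + 2) (by omega) (by omega)]; simp
        rw [show k + 1 + 1 = k + 2 from rfl, e, h2]; norm_num
    have hDW : ∀ i < n, ∀ j < n - 1,
        (j < ((Finset.range (n - 1)).filter (fun j => S i j = 1)).card → S i j = 1) ∧
        (((Finset.range (n - 1)).filter (fun j => S i j = 1)).card ≤ j → S i j = -1) :=
      fun i hi => dw_of_mono (n - 1) (S i) (hS i hi) (hmonoS i hi)
    have hTle : ∀ i, ((Finset.range (n - 1)).filter (fun j => S i j = 1)).card ≤ n - 1 :=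
      fun i => le_trans (Finset.card_filter_le _ _) (le_of_eq (Finset.card_range _))
    constructor
    · intro i hi
      exact ⟨_, hTle i, fun j hj => ⟨(hDW i hi j hj).1, (hDW i hi j hj).2⟩⟩
    · -- distinctness
      have hGterm : ∀ j < n - 1,
          ((n : ℚ) - 2 * (j : ℚ) - 2 - ∑ i ∈ Finset.range n, (S i j : ℚ)) = 0 := by
        intro j hj
        have := (Finset.sum_eq_zero_iff_of_nonneg
          (fun (j : ℕ) _ => sq_nonneg ((n : ℚ) - 2 * (j : ℚ) - 2 - ∑ i ∈ Finset.range n, (S i j : ℚ)))).mp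
          hG j (Finset.mem_range.mpr hj)
        exact pow_eq_zero_iff (n := 2) (by norm_num) |>.mp this
      have hcount : ∀ j, j + 1 < n →
          ((Finset.range n).filter
            (fun i => ((Finset.range (n - 1)).filter (fun j' => S i j' = 1)).card ≤ j)).card
            = j + 1 := by
        intro j hj
        have hj' : j < n - 1 := by omega
        have hcs := col_sum n S
          (fun i => ((Finset.range (n - 1)).filter (fun j' => S i j' = 1)).card) j
          (fun i hi => ⟨fun h => (hDW i hi j hj').2 h, fun h => (hDW i hi j hj').1 h⟩)
        have h0 := hGterm j hj'
        rw [hcs] at h0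
        have : (((Finset.range n).filter
            (fun i => ((Finset.range (n - 1)).filter (fun j' => S i j' = 1)).card ≤ j)).card : ℚ)
            = (j : ℚ) + 1 := by linarith
        exact_mod_cast this
      exact inj_of_count n
        (fun i => ((Finset.range (n - 1)).filter (fun j => S i j = 1)).card)
        (fun i _ => lt_of_le_of_lt (hTle i) (by omega)) hcount
  · -- backward direction
    rintro ⟨hdw, hinj⟩
    have hDW : ∀ i < n, ∀ j < n - 1,
        (j < ((Finset.range (n - 1)).filter (fun j => S i j = 1)).card → S i j = 1) ∧
        (((Finset.range (n - 1)).filter (fun j => S i j = 1)).card ≤ j → S i j = -1) := by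
      intro i hi
      obtain ⟨t, htle, hp⟩ := hdw i hi
      have hc := card_of_dw (n - 1) t (S i) htle hp
      intro j hj
      rw [hc]
      exact hp j hj
    have hTle : ∀ i, ((Finset.range (n - 1)).filter (fun j => S i j = 1)).card ≤ n - 1 :=
      fun i => le_trans (Finset.card_filter_le _ _) (le_of_eq (Finset.card_range _))
    have hcnt := count_of_inj n
      (fun i => ((Finset.range (n - 1)).filter (fun j => S i j = 1)).card)
      (fun i _ => lt_of_le_of_lt (hTle i) (by omega)) hinj
    -- second sum is zero
    have hG : ∑ j ∈ Finset.range (n - 1),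
        ((n : ℚ) - 2 * (j : ℚ) - 2 - ∑ i ∈ Finset.range n, (S i j : ℚ)) ^ 2 = 0 := by
      apply Finset.sum_eq_zero
      intro j hj
      simp only [Finset.mem_range] at hj
      have hcs := col_sum n S
        (fun i => ((Finset.range (n - 1)).filter (fun j' => S i j' = 1)).card) j
        (fun i hi => ⟨fun h => (hDW i hi j hj).2 h, fun h => (hDW i hi j hj).1 h⟩)
      have hc := hcnt j (by omega)
      rw [hcs, hc]
      push_cast
      ring_nf
    -- first sum equals 4n
    have hF : ∑ i ∈ Finset.range n, ∑ j ∈ Finset.range n,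
        ((gRowSpin n S i j : ℚ) - (gRowSpin n S i (j + 1) : ℚ)) ^ 2 = 4 * n := by
      rw [← hlin]
      apply Finset.sum_congr rfl
      intro i hi
      apply Finset.sum_congr rfl
      intro j hj
      simp only [Finset.mem_range] at hi hj
      apply (pm_sq_eq _ _ (hgpm i hi j (by omega)) (hgpm i hi (j + 1) (by omega))).mpr
      rintro ⟨h1, h2⟩
      rcases Nat.eq_zero_or_pos j with rfl | hj0
      · rw [hg0 i] at h1; norm_num at h1
      rcases Nat.lt_or_ge (j + 1) n with hjn | hjn
      · have e1 : gRowSpin n S i j = S i (j - 1) := hgmid i j hj0 (by omega)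
        have e2 : gRowSpin n S i (j + 1) = S i j := by
          rw [hgmid i (j + 1) (by omega) hjn]; simp
        rw [e1] at h1; rw [e2] at h2
        have h1' : S i (j - 1) = -1 := by exact_mod_cast h1
        have h2' : S i j = 1 := by exact_mod_cast h2
        have hjm : j < n - 1 := by omega
        have hc1 : ((Finset.range (n - 1)).filter (fun j => S i j = 1)).card ≤ j - 1 := by
          by_contra hcon
          have := (hDW i hi (j - 1) (by omega)).1 (by omega)
          omega
        have := (hDW i hi j hjm).2 (by omega)
        omega
      · have hje : j + 1 = n := by omega
        rw [hje, hgn i] at h2; norm_num at h2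
    rw [hF, hG]
    ring
end

section
/- Let n ≥ 1. Let A be an n×(n−1) binary matrix with guard bits a_{i,−1} = 1 and a_{i,n−1} = 0, and let B be an (n−1)×n binary matrix with guard bits b_{−1,j} = 1 and b_{n−1,j} = 0. Define Δa_{i,j} = a_{i,j−1} − a_{i,j} and Δb_{i,j} = b_{i−1,j} − b_{i,j} for 0 ≤ i, j ≤ n−1. Then the energy E_d^{nn}(A,B) = (1/2)·Σ_{i=0}^{n−1} Σ_{j=0}^{n−1} (Δa_{i,j})^2 + (1/2)·Σ_{i=0}^{n−1} Σ_{j=0}^{n−1} (Δb_{i,j})^2 + (1/2)·Σ_{i=0}^{n−1} Σ_{j=0}^{n−1} (Δa_{i,j} − Δb_{i,j})^2 (a rational number) satisfies E_d^{nn}(A,B) ≥ n, and E_d^{nn}(A,B) = n if and only if every guard-extended row of A is a domain-wall vector, every guard-extended column of B is a domain-wall vector, and Δa_{i,j} = Δb_{i,j} for all i, j. -/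
/-!
Row `i` of `A` contributes `∑ⱼ (Δa_{i,j})²` to `2 E`, where the integers `Δa_{i,j}` telescope to
`a_{i,-1} - a_{i,n-1} = 1`. Since `x ≤ x²` on `ℤ`, that contribution is at least `1`, with equality
iff every increment lies in `{0, 1}`, i.e. exactly one of them is `1`, i.e. the guard-extended row
is a domain wall. The columns of `B` behave in the same way, and the cross term is a sum of squares,
so `2 E ≥ n + n + 0`, with equality iff all three bounds are attained.
-/

/-- Guard-extended row of the matrix `A` (rows of length `n-1`, guard bits
`a_{i,-1} = 1` at shifted index `0` and `a_{i,n-1} = 0` at shifted index `n`). -/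
def gA (n : ℕ) (A : ℕ → ℕ → ℤ) (i j : ℕ) : ℤ :=
  if j = 0 then 1 else if j < n then A i (j - 1) else 0

/-- `Δa_{i,j} = a_{i,j-1} - a_{i,j}` computed on the guard-extended rows of `A`. -/
def dA (n : ℕ) (A : ℕ → ℕ → ℤ) (i j : ℕ) : ℤ := gA n A i j - gA n A i (j + 1)

/-- Guard-extended column of the matrix `B` (columns of length `m-1`, guard bits
`b_{-1,j} = 1` at shifted index `0` and `b_{m-1,j} = 0` at shifted index `m`). -/
def gB (m : ℕ) (B : ℕ → ℕ → ℤ) (i j : ℕ) : ℤ :=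
  if i = 0 then 1 else if i < m then B (i - 1) j else 0

/-- `Δb_{i,j} = b_{i-1,j} - b_{i,j}` computed on the guard-extended columns of `B`. -/
def dB (m : ℕ) (B : ℕ → ℕ → ℤ) (i j : ℕ) : ℤ := gB m B i j - gB m B (i + 1) j

/-- Row domain-wall condition: every guard-extended row of the `m × (n-1)` matrix `A`
is a domain-wall vector. -/
def RowDW (m n : ℕ) (A : ℕ → ℕ → ℤ) : Prop :=
  ∀ i < m, ∃ t ≤ n - 1, ∀ j < n - 1, (j < t → A i j = 1) ∧ (t ≤ j → A i j = 0)

/-- Column domain-wall condition: every guard-extended column of the `(m-1) × n` matrix `B`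
is a domain-wall vector. -/
def ColDW (m n : ℕ) (B : ℕ → ℕ → ℤ) : Prop :=
  ∀ j < n, ∃ t ≤ m - 1, ∀ i < m - 1, (i < t → B i j = 1) ∧ (t ≤ i → B i j = 0)

/-- The dual-matrix domain-wall QUBO energy
`E_dⁿⁿ(A,B) = ½ ΣΣ (Δa)² + ½ ΣΣ (Δb)² + ½ ΣΣ (Δa - Δb)²` over `0 ≤ i, j ≤ n-1`. -/
def Ed (m n : ℕ) (A B : ℕ → ℕ → ℤ) : ℚ :=
  (1 / 2 : ℚ) * ∑ i ∈ Finset.range m, ∑ j ∈ Finset.range n, (dA n A i j : ℚ) ^ 2 +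
  (1 / 2 : ℚ) * ∑ i ∈ Finset.range m, ∑ j ∈ Finset.range n, (dB m B i j : ℚ) ^ 2 +
  (1 / 2 : ℚ) * ∑ i ∈ Finset.range m, ∑ j ∈ Finset.range n,
    ((dA n A i j : ℚ) - (dB m B i j : ℚ)) ^ 2

open Finset

lemma exists_eq_ite_of_sum_eq_one_of_sum_sq_eq_one {ι : Type*} [DecidableEq ι] {s : Finset ι}
    {d : ι → ℤ} (hsum : ∑ j ∈ s, d j = 1) (hsq : ∑ j ∈ s, d j ^ 2 = 1) :
    ∃ t ∈ s, ∀ j ∈ s, d j = if j = t then 1 else 0 := by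
  have hidem : ∀ j ∈ s, d j = d j ^ 2 :=
    (sum_eq_sum_iff_of_le fun j _ => Int.le_self_sq (d j)).mp (hsum.trans hsq.symm)
  have hnonneg : ∀ j ∈ s, 0 ≤ d j := fun j hj => hidem j hj ▸ sq_nonneg (d j)
  obtain ⟨t, ht, hdt⟩ := exists_ne_zero_of_sum_ne_zero (hsum.trans_ne one_ne_zero)
  have hdt1 : d t = 1 := by
    have hfactor : d t * (d t - 1) = 0 := by linear_combination (hidem t ht).symm
    exact sub_eq_zero.mp ((mul_eq_zero.mp hfactor).resolve_left hdt)
  have hrest : ∑ j ∈ s.erase t, d j = 0 := by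
    have := add_sum_erase s d ht
    linarith
  have hzero :=
    (sum_eq_zero_iff_of_nonneg fun j hj => hnonneg j (mem_of_mem_erase hj)).mp hrest
  refine ⟨t, ht, fun j hj => ?_⟩
  split_ifs with hjt
  · exact hjt ▸ hdt1
  · exact hzero j (mem_erase.mpr ⟨hjt, hj⟩)

section StepSequence

variable {g : ℕ → ℤ} {n : ℕ}

lemma sum_sq_sub_succ_eq_one_of_eq_ite {t : ℕ} (ht : t < n)
    (hg : ∀ j ≤ n, g j = if j ≤ t then 1 else 0) :
    ∑ j ∈ range n, (g j - g (j + 1)) ^ 2 = 1 := by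
  have hterm : ∀ j ∈ range n, (g j - g (j + 1)) ^ 2 = if j = t then 1 else 0 := by
    intro j hj
    have hjn := mem_range.mp hj
    rw [hg j hjn.le, hg (j + 1) hjn]
    split_ifs <;> omega
  rw [sum_congr rfl hterm, sum_ite_eq', if_pos (mem_range.mpr ht)]

lemma one_le_sum_sq_sub_succ (h0 : g 0 = 1) (hn : g n = 0) :
    1 ≤ ∑ j ∈ range n, (g j - g (j + 1)) ^ 2 :=
  calc 1 = ∑ j ∈ range n, (g j - g (j + 1)) := by rw [sum_range_sub', h0, hn, sub_zero]
    _ ≤ _ := sum_le_sum fun j _ => Int.le_self_sq _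

lemma sum_sq_sub_succ_eq_one_iff (h0 : g 0 = 1) (hn : g n = 0) :
    ∑ j ∈ range n, (g j - g (j + 1)) ^ 2 = 1 ↔
      ∃ t < n, ∀ j ≤ n, g j = if j ≤ t then 1 else 0 := by
  refine ⟨fun hsq => ?_, fun ⟨t, ht, hg⟩ => sum_sq_sub_succ_eq_one_of_eq_ite ht hg⟩
  obtain ⟨t, ht, hd⟩ := exists_eq_ite_of_sum_eq_one_of_sum_sq_eq_one
    (by rw [sum_range_sub', h0, hn, sub_zero]) hsq
  refine ⟨t, mem_range.mp ht, fun j hj => ?_⟩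
  have hpartial : ∑ k ∈ range j, (g k - g (k + 1)) = if t ∈ range j then 1 else 0 := by
    rw [sum_congr rfl fun k hk => hd k (mem_range.mpr ((mem_range.mp hk).trans_le hj)),
      sum_ite_eq']
  rw [sum_range_sub', h0] at hpartial
  simp only [mem_range] at hpartial
  split_ifs at hpartial ⊢ <;> omega

end StepSequence

-- `gA n A i = guardExt n (A i)` and `(gB n B · j) = guardExt n (B · j)` hold by `rfl`, and
-- `RowDW n n A`, `ColDW n n B` unfold to `IsDomainWall` of every row of `A`, column of `B`.
def guardExt (n : ℕ) (f : ℕ → ℤ) (j : ℕ) : ℤ :=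
  if j = 0 then 1 else if j < n then f (j - 1) else 0

def IsDomainWall (n : ℕ) (f : ℕ → ℤ) : Prop :=
  ∃ t ≤ n - 1, ∀ j < n - 1, (j < t → f j = 1) ∧ (t ≤ j → f j = 0)

def wallEnergy (n : ℕ) (f : ℕ → ℤ) : ℤ :=
  ∑ j ∈ range n, (guardExt n f j - guardExt n f (j + 1)) ^ 2

section GuardExtension

variable {n : ℕ} {f : ℕ → ℤ}

lemma guardExt_zero : guardExt n f 0 = 1 := rfl

lemma guardExt_self (hn : 0 < n) : guardExt n f n = 0 := by
  simp [guardExt, hn.ne']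

lemma guardExt_eq_ite_iff {t : ℕ} (ht : t < n) :
    (∀ j ≤ n, guardExt n f j = if j ≤ t then 1 else 0) ↔
      ∀ j < n - 1, (j < t → f j = 1) ∧ (t ≤ j → f j = 0) := by
  constructor
  · intro hg j hj
    have h := hg (j + 1) (by omega)
    simp only [guardExt, j.succ_ne_zero, if_false, if_pos (show j + 1 < n by omega),
      Nat.add_sub_cancel] at h
    exact ⟨fun hjt => by rw [h, if_pos (by omega)], fun hjt => by rw [h, if_neg (by omega)]⟩
  · rintro hf (_ | k) hk
    · rfl
    · by_cases hkn : k + 1 < n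
      · obtain ⟨hlt, hge⟩ := hf k (by omega)
        simp only [guardExt, k.succ_ne_zero, if_false, if_pos hkn, Nat.add_sub_cancel]
        split_ifs
        · exact hlt (by omega)
        · exact hge (by omega)
      · simp only [guardExt, k.succ_ne_zero, if_false, if_neg hkn,
          if_neg (show ¬k + 1 ≤ t by omega)]

lemma one_le_wallEnergy (hn : 0 < n) : 1 ≤ wallEnergy n f :=
  one_le_sum_sq_sub_succ guardExt_zero (guardExt_self hn)

lemma wallEnergy_eq_one_iff (hn : 0 < n) : wallEnergy n f = 1 ↔ IsDomainWall n f := by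
  rw [wallEnergy, sum_sq_sub_succ_eq_one_iff guardExt_zero (guardExt_self hn)]
  exact exists_congr fun t => ⟨fun ⟨ht, hg⟩ => ⟨by omega, (guardExt_eq_ite_iff ht).mp hg⟩,
    fun ⟨ht, hf⟩ => ⟨by omega, (guardExt_eq_ite_iff (by omega)).mpr hf⟩⟩

end GuardExtension

lemma le_sum_wallEnergy (n : ℕ) (F : ℕ → ℕ → ℤ) :
    (n : ℤ) ≤ ∑ i ∈ range n, wallEnergy n (F i) := by
  simpa using card_nsmul_le_sum (range n) _ 1 fun i hi =>
    one_le_wallEnergy (Nat.zero_lt_of_lt (mem_range.mp hi))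

lemma sum_wallEnergy_eq_iff (n : ℕ) (F : ℕ → ℕ → ℤ) :
    ∑ i ∈ range n, wallEnergy n (F i) = n ↔ ∀ i < n, IsDomainWall n (F i) :=
  calc ∑ i ∈ range n, wallEnergy n (F i) = n
        ↔ ∑ i ∈ range n, (1 : ℤ) = ∑ i ∈ range n, wallEnergy n (F i) := by simp [eq_comm]
    _ ↔ ∀ i ∈ range n, 1 = wallEnergy n (F i) :=
        sum_eq_sum_iff_of_le fun i hi => one_le_wallEnergy (Nat.zero_lt_of_lt (mem_range.mp hi))
    _ ↔ ∀ i < n, IsDomainWall n (F i) := by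
        simp only [mem_range]
        exact forall₂_congr fun i hi =>
          eq_comm.trans (wallEnergy_eq_one_iff (Nat.zero_lt_of_lt hi))

lemma sum_sum_sq_sub_eq_zero_iff {ι κ : Type*} (s : Finset ι) (t : Finset κ) (a b : ι → κ → ℤ) :
    ∑ i ∈ s, ∑ j ∈ t, (a i j - b i j) ^ 2 = 0 ↔ ∀ i ∈ s, ∀ j ∈ t, a i j = b i j := by
  simp only [sum_eq_zero_iff_of_nonneg fun _ _ => sum_nonneg fun _ _ => sq_nonneg _,
    sum_eq_zero_iff_of_nonneg fun _ _ => sq_nonneg _, sq_eq_zero_iff, sub_eq_zero]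

lemma two_mul_Ed (n : ℕ) (A B : ℕ → ℕ → ℤ) :
    2 * Ed n n A B = ((∑ i ∈ range n, wallEnergy n (A i) + ∑ j ∈ range n, wallEnergy n (B · j) +
      ∑ i ∈ range n, ∑ j ∈ range n, (dA n A i j - dB n B i j) ^ 2 : ℤ) : ℚ) := by
  have hA : ∑ i ∈ range n, wallEnergy n (A i) = ∑ i ∈ range n, ∑ j ∈ range n, dA n A i j ^ 2 :=
    rfl
  have hB : ∑ j ∈ range n, wallEnergy n (B · j) = ∑ i ∈ range n, ∑ j ∈ range n, dB n B i j ^ 2 :=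
    sum_comm
  rw [hA, hB, Ed]
  push_cast
  ring

theorem dual_matrix_domain_wall_energy_general (n : ℕ) (A B : ℕ → ℕ → ℤ) :
    (n : ℚ) ≤ Ed n n A B ∧
    (Ed n n A B = n ↔
      RowDW n n A ∧ ColDW n n B ∧ ∀ i < n, ∀ j < n, dA n A i j = dB n B i j) := by
  have hE := two_mul_Ed n A B
  set R := ∑ i ∈ range n, wallEnergy n (A i)
  set C := ∑ j ∈ range n, wallEnergy n (B · j)
  set D := ∑ i ∈ range n, ∑ j ∈ range n, (dA n A i j - dB n B i j) ^ 2
  have hR : (n : ℤ) ≤ R := le_sum_wallEnergy n A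
  have hC : (n : ℤ) ≤ C := le_sum_wallEnergy n fun j i => B i j
  have hD : 0 ≤ D := sum_nonneg fun _ _ => sum_nonneg fun _ _ => sq_nonneg _
  have hEn : Ed n n A B = n ↔ R = n ∧ C = n ∧ D = 0 := by
    constructor
    · intro h
      have : R + C + D = 2 * n := by rw [h] at hE; exact_mod_cast hE.symm
      omega
    · rintro ⟨hRn, hCn, hD0⟩
      rw [hRn, hCn, hD0] at hE
      push_cast at hE
      linarith
  refine ⟨?_, hEn.trans ?_⟩
  · have : ((2 * n : ℤ) : ℚ) ≤ ((R + C + D : ℤ) : ℚ) := by exact_mod_cast (by omega)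
    push_cast at this hE
    linarith
  · rw [sum_wallEnergy_eq_iff, sum_wallEnergy_eq_iff, sum_sum_sq_sub_eq_zero_iff]
    simp only [mem_range]
    rfl

/-- For an `n × (n-1)` binary matrix `A` and an `(n-1) × n` binary matrix `B` (with guard
bits), the energy `E_dⁿⁿ(A,B)` is at least `n`, and equals `n` iff every guard-extended row
of `A` is a domain-wall vector, every guard-extended column of `B` is a domain-wall vector,
and `Δa_{i,j} = Δb_{i,j}` for all `i, j`. -/
theorem dual_matrix_domain_wall_energy (n : ℕ) (hn : 1 ≤ n) (A B : ℕ → ℕ → ℤ)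
    (hA : ∀ i < n, ∀ j < n - 1, A i j = 0 ∨ A i j = 1)
    (hB : ∀ i < n - 1, ∀ j < n, B i j = 0 ∨ B i j = 1) :
    (n : ℚ) ≤ Ed n n A B ∧
    (Ed n n A B = n ↔
      RowDW n n A ∧ ColDW n n B ∧ ∀ i < n, ∀ j < n, dA n A i j = dB n B i j) :=
  dual_matrix_domain_wall_energy_general n A B
end

section
/- (Lemma 1) Let 1 ≤ m ≤ n. Let A be an m×(n−1) binary matrix with guard bits a_{i,−1} = 1 and a_{i,n−1} = 0, and let B be an (m−1)×n binary matrix with guard bits b_{−1,j} = 1 and b_{m−1,j} = 0. Define Δa_{i,j} = a_{i,j−1} − a_{i,j} and Δb_{i,j} = b_{i−1,j} − b_{i,j} for 0 ≤ i ≤ m−1 and 0 ≤ j ≤ n−1, and set E_d^{mn}(A,B) = (1/2)·Σ_{i,j} (Δa_{i,j})^2 + (1/2)·Σ_{i,j} (Δb_{i,j})^2 + (1/2)·Σ_{i,j} (Δa_{i,j} − Δb_{i,j})^2. If at least one of the row domain-wall condition, the column domain-wall condition, or the dual-permutation condition fails, then E_d^{mn}(A,B) > n. -/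
/-- Dual-permutation condition: for all `i < m` and `j < n`, if `Δa_{i,j} = 1` then
`Δb_{i,j} = 1`. -/
def DualPerm (m n : ℕ) (A B : ℕ → ℕ → ℤ) : Prop :=
  ∀ i < m, ∀ j < n, dA n A i j = 1 → dB m B i j = 1


/-!
With `a = Δa_{i,j}` and `b = Δb_{i,j}` the energy is `Σ (a² + b² - a b)`, and since
`a ∈ {-1, 0, 1}` each cell contributes at least `b`. Down each column the `Δb` telescope to the
guard difference `1 - 0 = 1`, so the energy is at least `n`, strictly so if some cell is a
*defect*: `a = -1`, `b = -1`, or `a = 1 ≠ b`. A binary sequence without an ascent `0 → 1` is a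
domain wall, so if a domain-wall condition fails some `Δa` or `Δb` equals `-1`, and if the
dual-permutation condition fails some cell has `a = 1 ≠ b`.
-/

open Finset

lemma exists_domainWall_of_succ_le {x : ℕ → ℤ} {L : ℕ}
    (hx : ∀ j < L, x j = 0 ∨ x j = 1) (hanti : ∀ j, j + 1 < L → x (j + 1) ≤ x j) :
    ∃ t ≤ L, ∀ j < L, (j < t → x j = 1) ∧ (t ≤ j → x j = 0) := by
  classical
  have hex : ∃ t, L ≤ t ∨ x t = 0 := ⟨L, Or.inl le_rfl⟩
  set t := Nat.find hex
  refine ⟨t, Nat.find_min' hex (Or.inl le_rfl), fun j hj => ⟨fun hjt => ?_, fun htj => ?_⟩⟩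
  · have hne : ¬(L ≤ j ∨ x j = 0) := Nat.find_min hex hjt
    exact (hx j hj).resolve_left fun h => hne (Or.inr h)
  · have ht : x t = 0 := (Nat.find_spec hex).resolve_left (by omega)
    have hle : x j ≤ x t := by
      induction j, htj using Nat.le_induction with
      | base => exact le_rfl
      | succ k _ ih => exact (hanti k hj).trans (ih (by omega))
    rcases hx j hj with h | h <;> omega

section Guards

variable {m n : ℕ} {A B : ℕ → ℕ → ℤ}

lemma gA_eq_zero_or_one {i : ℕ} (hA : ∀ j < n - 1, A i j = 0 ∨ A i j = 1) (k : ℕ) :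
    gA n A i k = 0 ∨ gA n A i k = 1 := by
  unfold gA
  split_ifs
  · exact Or.inr rfl
  · exact hA (k - 1) (by omega)
  · exact Or.inl rfl

lemma dA_mem {i : ℕ} (hA : ∀ j < n - 1, A i j = 0 ∨ A i j = 1) (j : ℕ) :
    dA n A i j = -1 ∨ dA n A i j = 0 ∨ dA n A i j = 1 := by
  have := gA_eq_zero_or_one hA j
  have := gA_eq_zero_or_one hA (j + 1)
  unfold dA
  omega

lemma dA_succ {i j : ℕ} (hj : j + 1 < n - 1) : dA n A i (j + 1) = A i j - A i (j + 1) := by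
  simp [dA, gA, show j + 1 < n by omega, show j + 1 + 1 < n by omega]

lemma dB_succ {i j : ℕ} (hi : i + 1 < m - 1) : dB m B (i + 1) j = B i j - B (i + 1) j := by
  simp [dB, gB, show i + 1 < m by omega, show i + 1 + 1 < m by omega]

lemma sum_dB_eq_one (hm : 0 < m) (j : ℕ) : ∑ i ∈ range m, dB m B i j = 1 := by
  refine (sum_range_sub' (fun i => gB m B i j) m).trans ?_
  simp [gB, hm.ne']

lemma rowDW_of_forall_dA_ne_neg_one (hA : ∀ i < m, ∀ j < n - 1, A i j = 0 ∨ A i j = 1)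
    (h : ∀ i < m, ∀ j < n, dA n A i j ≠ -1) : RowDW m n A := by
  intro i hi
  refine exists_domainWall_of_succ_le (hA i hi) fun j hj => ?_
  have hne := h i hi (j + 1) (by omega)
  rw [dA_succ hj] at hne
  rcases hA i hi j (by omega) with h₀ | h₀ <;> rcases hA i hi (j + 1) hj with h₁ | h₁ <;> omega

lemma colDW_of_forall_dB_ne_neg_one (hB : ∀ i < m - 1, ∀ j < n, B i j = 0 ∨ B i j = 1)
    (h : ∀ i < m, ∀ j < n, dB m B i j ≠ -1) : ColDW m n B := by
  intro j hj
  refine exists_domainWall_of_succ_le (fun i hi => hB i hi j hj) fun i hi => ?_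
  have hne := h (i + 1) (by omega) j hj
  rw [dB_succ hi] at hne
  rcases hB i (by omega) j hj with h₀ | h₀ <;> rcases hB (i + 1) hi j hj with h₁ | h₁ <;> omega

end Guards

/-- `(a² + b² + (a - b)²) / 2`, the energy of one cell with `a = Δa`, `b = Δb`. -/
def cellEnergy (a b : ℤ) : ℤ := a ^ 2 + b ^ 2 - a * b

def IsDefect (a b : ℤ) : Prop := a = -1 ∨ b = -1 ∨ (a = 1 ∧ b ≠ 1)

lemma le_cellEnergy {a : ℤ} (ha : a = -1 ∨ a = 0 ∨ a = 1) (b : ℤ) : b ≤ cellEnergy a b := by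
  unfold cellEnergy
  rcases ha with rfl | rfl | rfl <;> nlinarith [sq_nonneg b, sq_nonneg (b - 1)]

lemma lt_cellEnergy_of_isDefect {a b : ℤ} (h : IsDefect a b) : b < cellEnergy a b := by
  unfold cellEnergy
  rcases h with rfl | rfl | ⟨rfl, hb⟩
  · nlinarith [sq_nonneg b]
  · nlinarith [sq_nonneg (a + 1)]
  · nlinarith [sq_pos_of_ne_zero (sub_ne_zero.2 hb)]

lemma Ed_eq_sum_cellEnergy (m n : ℕ) (A B : ℕ → ℕ → ℤ) :
    Ed m n A B = ∑ i ∈ range m, ∑ j ∈ range n, (cellEnergy (dA n A i j) (dB m B i j) : ℚ) := by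
  rw [Ed]
  simp only [cellEnergy, mul_sum, ← sum_add_distrib]
  push_cast
  exact sum_congr rfl fun _ _ => sum_congr rfl fun _ _ => by ring

lemma exists_isDefect_of_not_conditions {m n : ℕ} {A B : ℕ → ℕ → ℤ}
    (hA : ∀ i < m, ∀ j < n - 1, A i j = 0 ∨ A i j = 1)
    (hB : ∀ i < m - 1, ∀ j < n, B i j = 0 ∨ B i j = 1)
    (hcond : ¬(RowDW m n A ∧ ColDW m n B ∧ DualPerm m n A B)) :
    ∃ i < m, ∃ j < n, IsDefect (dA n A i j) (dB m B i j) := by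
  by_contra! h
  simp only [IsDefect, not_or, not_and_or, not_ne_iff] at h
  exact hcond ⟨rowDW_of_forall_dA_ne_neg_one hA fun i hi j hj => (h i hi j hj).1,
    colDW_of_forall_dB_ne_neg_one hB fun i hi j hj => (h i hi j hj).2.1,
    fun i hi j hj ha => ((h i hi j hj).2.2).resolve_left (not_not.2 ha)⟩

theorem Ed_gt_of_not_conditions_general (m n : ℕ)
    (A B : ℕ → ℕ → ℤ)
    (hA : ∀ i < m, ∀ j < n - 1, A i j = 0 ∨ A i j = 1)
    (hB : ∀ i < m - 1, ∀ j < n, B i j = 0 ∨ B i j = 1)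
    (hcond : ¬(RowDW m n A ∧ ColDW m n B ∧ DualPerm m n A B)) :
    (n : ℚ) < Ed m n A B := by
  obtain ⟨i₀, hi₀, j₀, hj₀, hdefect⟩ := exists_isDefect_of_not_conditions hA hB hcond
  have hsum : ∑ i ∈ range m, ∑ j ∈ range n, dB m B i j = n := by
    rw [sum_comm]
    simp [sum_dB_eq_one (Nat.zero_lt_of_lt hi₀)]
  have hlt : ∑ i ∈ range m, ∑ j ∈ range n, dB m B i j <
      ∑ i ∈ range m, ∑ j ∈ range n, cellEnergy (dA n A i j) (dB m B i j) :=
    sum_lt_sum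
      (fun i hi => sum_le_sum fun j _ => le_cellEnergy (dA_mem (hA i (mem_range.1 hi)) j) _)
      ⟨i₀, mem_range.2 hi₀, sum_lt_sum (fun j _ => le_cellEnergy (dA_mem (hA i₀ hi₀) j) _)
        ⟨j₀, mem_range.2 hj₀, lt_cellEnergy_of_isDefect hdefect⟩⟩
  rw [hsum] at hlt
  rw [Ed_eq_sum_cellEnergy]
  exact_mod_cast hlt

/-- Lemma 1: if at least one of the row domain-wall, column domain-wall, or
dual-permutation conditions fails, then `E_dᵐⁿ(A,B) > n`. -/
theorem Ed_gt_of_not_conditions (m n : ℕ) (hm : 1 ≤ m) (hmn : m ≤ n)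
    (A B : ℕ → ℕ → ℤ)
    (hA : ∀ i < m, ∀ j < n - 1, A i j = 0 ∨ A i j = 1)
    (hB : ∀ i < m - 1, ∀ j < n, B i j = 0 ∨ B i j = 1)
    (hcond : ¬(RowDW m n A ∧ ColDW m n B ∧ DualPerm m n A B)) :
    (n : ℚ) < Ed m n A B :=
  Ed_gt_of_not_conditions_general m n A B hA hB hcond
end

section
/- Let n ≥ 1. Let A be an n×(n−1) binary matrix with guard bits a_{i,−1} = 1 and a_{i,n−1} = 0, let B be an (n−1)×n binary matrix with guard bits b_{−1,j} = 1 and b_{n−1,j} = 0, and let X = (x_{i,j}) be an n×n binary matrix. Define Δa_{i,j} = a_{i,j−1} − a_{i,j} and Δb_{i,j} = b_{i−1,j} − b_{i,j} for 0 ≤ i, j ≤ n−1. Then the energy E_e^{nn}(A,B,X) = (1/2)·Σ_{i,j} (Δa_{i,j})^2 + (1/2)·Σ_{i,j} (Δb_{i,j})^2 + (1/2)·Σ_{i,j} (x_{i,j} − Δa_{i,j})^2 + (1/2)·Σ_{i,j} (x_{i,j} − Δb_{i,j})^2 satisfies E_e^{nn}(A,B,X) ≥ n, and E_e^{nn}(A,B,X)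 = n if and only if every guard-extended row of A is a domain-wall vector, every guard-extended column of B is a domain-wall vector, Δa_{i,j} = Δb_{i,j} for all i, j, and x_{i,j} = Δa_{i,j} for all i, j. -/
/-- The extended dual-matrix domain-wall QUBO energy
`E_eⁿⁿ(A,B,X) = ½ ΣΣ (Δa)² + ½ ΣΣ (Δb)² + ½ ΣΣ (x - Δa)² + ½ ΣΣ (x - Δb)²`
over `0 ≤ i, j ≤ n-1`. -/
def Ee (n : ℕ) (A B X : ℕ → ℕ → ℤ) : ℚ :=
  (1 / 2 : ℚ) * ∑ i ∈ Finset.range n, ∑ j ∈ Finset.range n, (dA n A i j : ℚ) ^ 2 +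
  (1 / 2 : ℚ) * ∑ i ∈ Finset.range n, ∑ j ∈ Finset.range n, (dB n B i j : ℚ) ^ 2 +
  (1 / 2 : ℚ) * ∑ i ∈ Finset.range n, ∑ j ∈ Finset.range n,
    ((X i j : ℚ) - (dA n A i j : ℚ)) ^ 2 +
  (1 / 2 : ℚ) * ∑ i ∈ Finset.range n, ∑ j ∈ Finset.range n,
    ((X i j : ℚ) - (dB n B i j : ℚ)) ^ 2

open Finset

lemma sum_eq_one_of_bounds {n : ℕ} {f : ℕ → ℤ}
    (h1 : ∀ i ∈ range n, 1 ≤ f i) (hs : ∑ i ∈ range n, f i = n) :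
    ∀ i ∈ range n, f i = 1 := by
  have h0 : ∑ i ∈ range n, (f i - 1) = 0 := by
    rw [Finset.sum_sub_distrib]; simp [hs]
  have h := (Finset.sum_eq_zero_iff_of_nonneg
    (fun i hi => by linarith [h1 i hi])).mp h0
  intro i hi; linarith [h i hi]

lemma dw_char (n : ℕ) (hn : 1 ≤ n) (g : ℕ → ℤ)
    (h0 : g 0 = 1) (htop : ∀ j, n ≤ j → g j = 0)
    (hbin : ∀ j, g j = 0 ∨ g j = 1) :
    1 ≤ ∑ j ∈ Finset.range n, (g j - g (j+1))^2 ∧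
    ((∑ j ∈ Finset.range n, (g j - g (j+1))^2 = 1) ↔
      ∃ t < n, ∀ j, g j = if j ≤ t then 1 else 0) := by
  set d : ℕ → ℤ := fun j => g j - g (j+1) with hd
  have hdval : ∀ j, d j = -1 ∨ d j = 0 ∨ d j = 1 := by
    intro j; rcases hbin j with h|h <;> rcases hbin (j+1) with h'|h' <;>
      simp [hd, h, h']
  have hsq : ∀ j, (d j)^2 = |d j| := by
    intro j; rcases hdval j with h|h|h <;> rw [h] <;> norm_num
  have hsum : ∑ j ∈ Finset.range n, d j = 1 := by
    have := Finset.sum_range_sub' g n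
    simp only [hd]
    rw [this, h0, htop n le_rfl, sub_zero]
  have hsumabs : ∑ j ∈ Finset.range n, (d j)^2 = ∑ j ∈ Finset.range n, |d j| :=
    Finset.sum_congr rfl (fun j _ => hsq j)
  have hge : 1 ≤ ∑ j ∈ Finset.range n, (d j)^2 := by
    rw [hsumabs]
    calc (1:ℤ) = |∑ j ∈ Finset.range n, d j| := by rw [hsum]; norm_num
    _ ≤ ∑ j ∈ Finset.range n, |d j| := Finset.abs_sum_le_sum_abs _ _
  refine ⟨hge, ?_, ?_⟩
  · intro heq
    -- exactly one nonzero
    have hne : ∃ t ∈ range n, d t ≠ 0 := by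
      by_contra hc
      push_neg at hc
      have : ∑ j ∈ Finset.range n, d j = 0 := Finset.sum_eq_zero hc
      omega
    obtain ⟨t, htm, htne⟩ := hne
    have habs : |d t| = 1 := by rcases hdval t with h|h|h <;> simp [h] at htne ⊢
    have herase : ∑ j ∈ (range n).erase t, |d j| = 0 := by
      have hadd := Finset.add_sum_erase (range n) (fun j => |d j|) htm
      rw [hsumabs] at heq
      omega
    have hzero : ∀ j < n, j ≠ t → d j = 0 := by
      intro j hj hjt
      have := (Finset.sum_eq_zero_iff_of_nonneg
        (fun j _ => abs_nonneg (d j))).mp herase j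
        (Finset.mem_erase.mpr ⟨hjt, Finset.mem_range.mpr hj⟩)
      exact abs_eq_zero.mp this
    have hdt : d t = 1 := by
      have := Finset.add_sum_erase (range n) d htm
      have h2 : ∑ j ∈ (range n).erase t, d j = 0 :=
        Finset.sum_eq_zero (fun j hj => hzero j
          (Finset.mem_range.mp (Finset.mem_erase.mp hj).2)
          (Finset.mem_erase.mp hj).1)
      omega
    have ht : t < n := Finset.mem_range.mp htm
    have hstep : ∀ j, g (j+1) = g j - d j := fun j => by simp [hd]
    have hle : ∀ j, j ≤ t → g j = 1 := by
      intro j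
      induction j with
      | zero => intro _; exact h0
      | succ k ih =>
        intro hk
        rw [hstep k, hzero k (by omega) (by omega), ih (by omega)]
        ring
    have hgt : ∀ j, t + 1 ≤ j → g j = 0 := by
      intro j
      induction j with
      | zero => omega
      | succ k ih =>
        intro hk
        rcases Nat.lt_or_ge k n with hkn | hkn
        · rcases Nat.eq_or_lt_of_le hk with h | h
          · rw [hstep k, (by omega : k = t), hdt, hle t le_rfl]; ring
          · rw [hstep k, hzero k hkn (by omega), ih (by omega)]; ring
        · exact htop (k+1) (by omega)
    refine ⟨t, ht, fun j => ?_⟩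
    by_cases hjt : j ≤ t
    · rw [if_pos hjt]; exact hle j hjt
    · rw [if_neg hjt]; exact hgt j (by omega)
  · rintro ⟨t, ht, hg⟩
    have hdj : ∀ j, (d j)^2 = if j = t then 1 else 0 := by
      intro j
      simp only [hd]
      rw [hg j, hg (j+1)]
      rcases lt_trichotomy j t with h|h|h
      · rw [if_pos h.le, if_pos (by omega), if_neg (by omega)]; ring
      · subst h; rw [if_pos le_rfl, if_neg (by omega), if_pos rfl]; ring
      · rw [if_neg (by omega), if_neg (by omega), if_neg (by omega)]; ring
    rw [Finset.sum_congr rfl (fun j _ => hdj j)]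
    rw [Finset.sum_ite_eq' (range n) t (fun _ => (1:ℤ))]
    rw [if_pos (Finset.mem_range.mpr ht)]

lemma bridgeA (n : ℕ) (hn : 1 ≤ n) (A : ℕ → ℕ → ℤ) (i : ℕ) :
    (∃ t < n, ∀ j, gA n A i j = if j ≤ t then 1 else 0) ↔
    (∃ t ≤ n - 1, ∀ j < n - 1, (j < t → A i j = 1) ∧ (t ≤ j → A i j = 0)) := by
  have hgsucc : ∀ j, j < n - 1 → gA n A i (j+1) = A i j := by
    intro j hj
    unfold gA
    rw [if_neg (by omega), if_pos (by omega)]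
    simp
  constructor
  · rintro ⟨t, ht, hg⟩
    refine ⟨t, by omega, fun j hj => ⟨fun h => ?_, fun h => ?_⟩⟩
    · have := hg (j+1); rw [if_pos (by omega)] at this
      rw [← hgsucc j hj]; exact this
    · have := hg (j+1); rw [if_neg (by omega)] at this
      rw [← hgsucc j hj]; exact this
  · rintro ⟨t, ht, hdw⟩
    refine ⟨t, by omega, fun j => ?_⟩
    unfold gA
    by_cases hj0 : j = 0
    · subst hj0; rw [if_pos rfl, if_pos (by omega)]
    · rw [if_neg hj0]
      by_cases hjn : j < n
      · rw [if_pos hjn]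
        by_cases hjt : j ≤ t
        · rw [if_pos hjt]; exact (hdw (j-1) (by omega)).1 (by omega)
        · rw [if_neg hjt]; exact (hdw (j-1) (by omega)).2 (by omega)
      · rw [if_neg hjn, if_neg (by omega)]

lemma bridgeB (n : ℕ) (hn : 1 ≤ n) (B : ℕ → ℕ → ℤ) (j : ℕ) :
    (∃ t < n, ∀ i, gB n B i j = if i ≤ t then 1 else 0) ↔
    (∃ t ≤ n - 1, ∀ i < n - 1, (i < t → B i j = 1) ∧ (t ≤ i → B i j = 0)) := by
  have hgsucc : ∀ i, i < n - 1 → gB n B (i+1) j = B i j := by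
    intro i hi
    unfold gB
    rw [if_neg (by omega), if_pos (by omega)]
    simp
  constructor
  · rintro ⟨t, ht, hg⟩
    refine ⟨t, by omega, fun i hi => ⟨fun h => ?_, fun h => ?_⟩⟩
    · have := hg (i+1); rw [if_pos (by omega)] at this
      rw [← hgsucc i hi]; exact this
    · have := hg (i+1); rw [if_neg (by omega)] at this
      rw [← hgsucc i hi]; exact this
  · rintro ⟨t, ht, hdw⟩
    refine ⟨t, by omega, fun i => ?_⟩
    unfold gB
    by_cases hi0 : i = 0
    · subst hi0; rw [if_pos rfl, if_pos (by omega)]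
    · rw [if_neg hi0]
      by_cases hin : i < n
      · rw [if_pos hin]
        by_cases hit : i ≤ t
        · rw [if_pos hit]; exact (hdw (i-1) (by omega)).1 (by omega)
        · rw [if_neg hit]; exact (hdw (i-1) (by omega)).2 (by omega)
      · rw [if_neg hin, if_neg (by omega)]


/-- For an `n × (n-1)` binary matrix `A`, an `(n-1) × n` binary matrix `B` (with guard
bits) and an `n × n` binary matrix `X`, the energy `E_eⁿⁿ(A,B,X)` is at least `n`, and
equals `n` iff every guard-extended row of `A` is a domain-wall vector, every
guard-extended column of `B` is a domain-wall vector, `Δa_{i,j} = Δb_{i,j}` for all `i, j`,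
and `x_{i,j} = Δa_{i,j}` for all `i, j`. -/

theorem extended_dual_matrix_energy (n : ℕ) (hn : 1 ≤ n) (A B X : ℕ → ℕ → ℤ)
    (hA : ∀ i < n, ∀ j < n - 1, A i j = 0 ∨ A i j = 1)
    (hB : ∀ i < n - 1, ∀ j < n, B i j = 0 ∨ B i j = 1)
    (hX : ∀ i < n, ∀ j < n, X i j = 0 ∨ X i j = 1) :
    (n : ℚ) ≤ Ee n A B X ∧
    (Ee n A B X = n ↔
      RowDW n n A ∧ ColDW n n B ∧
      (∀ i < n, ∀ j < n, dA n A i j = dB n B i j) ∧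
      (∀ i < n, ∀ j < n, X i j = dA n A i j)) := by
  classical
  set SA : ℤ := ∑ i ∈ Finset.range n, ∑ j ∈ Finset.range n, (dA n A i j)^2 with hSAdef
  set SB : ℤ := ∑ i ∈ Finset.range n, ∑ j ∈ Finset.range n, (dB n B i j)^2 with hSBdef
  set S1 : ℤ := ∑ i ∈ Finset.range n, ∑ j ∈ Finset.range n, (X i j - dA n A i j)^2
    with hS1def
  set S2 : ℤ := ∑ i ∈ Finset.range n, ∑ j ∈ Finset.range n, (X i j - dB n B i j)^2
    with hS2def
  have hEe : Ee n A B X = ((SA + SB + S1 + S2 : ℤ) : ℚ) / 2 := by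
    rw [hSAdef, hSBdef, hS1def, hS2def]
    unfold Ee
    push_cast
    ring
  -- per-row facts for A
  have hrowA : ∀ i < n,
      1 ≤ ∑ j ∈ Finset.range n, (dA n A i j)^2 ∧
      ((∑ j ∈ Finset.range n, (dA n A i j)^2 = 1) ↔
        ∃ t < n, ∀ j, gA n A i j = if j ≤ t then 1 else 0) := by
    intro i hi
    have h := dw_char n hn (gA n A i)
      (by unfold gA; rw [if_pos rfl])
      (by intro j hj; unfold gA; rw [if_neg (by omega), if_neg (by omega)])
      (by
        intro j
        unfold gA
        by_cases h0 : j = 0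
        · rw [if_pos h0]; right; rfl
        · rw [if_neg h0]
          by_cases hjn : j < n
          · rw [if_pos hjn]; exact hA i hi (j-1) (by omega)
          · rw [if_neg hjn]; left; rfl)
    simpa only [dA] using h
  -- per-column facts for B
  have hcolB : ∀ j < n,
      1 ≤ ∑ i ∈ Finset.range n, (dB n B i j)^2 ∧
      ((∑ i ∈ Finset.range n, (dB n B i j)^2 = 1) ↔
        ∃ t < n, ∀ i, gB n B i j = if i ≤ t then 1 else 0) := by
    intro j hj
    have h := dw_char n hn (fun i => gB n B i j)
      (by show gB n B 0 j = 1; unfold gB; rw [if_pos rfl])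
      (by intro i hi; show gB n B i j = 0; unfold gB
          rw [if_neg (by omega), if_neg (by omega)])
      (by
        intro i
        show gB n B i j = 0 ∨ gB n B i j = 1
        unfold gB
        by_cases h0 : i = 0
        · rw [if_pos h0]; right; rfl
        · rw [if_neg h0]
          by_cases hin : i < n
          · rw [if_pos hin]; exact hB (i-1) (by omega) j hj
          · rw [if_neg hin]; left; rfl)
    simpa only [dB] using h
  have hswap : SB = ∑ j ∈ Finset.range n, ∑ i ∈ Finset.range n, (dB n B i j)^2 := by
    rw [hSBdef]; exact Finset.sum_comm
  have hSAge : (n : ℤ) ≤ SA := by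
    rw [hSAdef]
    calc (n:ℤ) = ∑ _i ∈ Finset.range n, (1:ℤ) := by simp
    _ ≤ _ := Finset.sum_le_sum (fun i hi => (hrowA i (Finset.mem_range.mp hi)).1)
  have hSBge : (n : ℤ) ≤ SB := by
    rw [hswap]
    calc (n:ℤ) = ∑ _j ∈ Finset.range n, (1:ℤ) := by simp
    _ ≤ _ := Finset.sum_le_sum (fun j hj => (hcolB j (Finset.mem_range.mp hj)).1)
  have hS1ge : 0 ≤ S1 := Finset.sum_nonneg fun i _ =>
    Finset.sum_nonneg fun j _ => sq_nonneg _
  have hS2ge : 0 ≤ S2 := Finset.sum_nonneg fun i _ =>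
    Finset.sum_nonneg fun j _ => sq_nonneg _
  constructor
  · rw [hEe, le_div_iff₀ (by norm_num : (0:ℚ) < 2)]
    have : (2 * n : ℤ) ≤ SA + SB + S1 + S2 := by omega
    calc (n:ℚ) * 2 = ((2 * n : ℤ) : ℚ) := by push_cast; ring
    _ ≤ _ := by exact_mod_cast this
  · have hiff : Ee n A B X = n ↔ SA + SB + S1 + S2 = 2 * n := by
      rw [hEe, div_eq_iff (by norm_num : (2:ℚ) ≠ 0)]
      constructor
      · intro h
        have h2 : ((SA + SB + S1 + S2 : ℤ) : ℚ) = ((2 * n : ℤ) : ℚ) := by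
          rw [h]; push_cast; ring
        exact_mod_cast h2
      · intro h; rw [h]; push_cast; ring
    rw [hiff]
    have hdecomp : SA + SB + S1 + S2 = 2 * n ↔
        (SA = n ∧ SB = n ∧ S1 = 0 ∧ S2 = 0) := by omega
    rw [hdecomp]
    -- characterizations
    have hSAiff : SA = n ↔ ∀ i < n, ∑ j ∈ Finset.range n, (dA n A i j)^2 = 1 := by
      constructor
      · intro h i hi
        exact sum_eq_one_of_bounds
          (fun i hi => (hrowA i (Finset.mem_range.mp hi)).1)
          (by rw [← hSAdef]; exact h) i (Finset.mem_range.mpr hi)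
      · intro h
        rw [hSAdef]
        rw [Finset.sum_congr rfl (fun i hi => h i (Finset.mem_range.mp hi))]
        simp
    have hSBiff : SB = n ↔ ∀ j < n, ∑ i ∈ Finset.range n, (dB n B i j)^2 = 1 := by
      rw [hswap]
      constructor
      · intro h j hj
        exact sum_eq_one_of_bounds
          (fun j hj => (hcolB j (Finset.mem_range.mp hj)).1)
          h j (Finset.mem_range.mpr hj)
      · intro h
        rw [Finset.sum_congr rfl (fun j hj => h j (Finset.mem_range.mp hj))]
        simp
    have hS1iff : S1 = 0 ↔ ∀ i < n, ∀ j < n, X i j = dA n A i j := by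
      rw [hS1def, Finset.sum_eq_zero_iff_of_nonneg
        (fun i _ => Finset.sum_nonneg fun j _ => sq_nonneg _)]
      constructor
      · intro h i hi j hj
        have h2 := (Finset.sum_eq_zero_iff_of_nonneg
          (fun j _ => sq_nonneg (X i j - dA n A i j))).mp
          (h i (Finset.mem_range.mpr hi)) j (Finset.mem_range.mpr hj)
        have := sq_eq_zero_iff.mp h2
        linarith
      · intro h i hi
        apply Finset.sum_eq_zero
        intro j hj
        rw [h i (Finset.mem_range.mp hi) j (Finset.mem_range.mp hj)]
        ring
    have hS2iff : S2 = 0 ↔ ∀ i < n, ∀ j < n, X i j = dB n B i j := by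
      rw [hS2def, Finset.sum_eq_zero_iff_of_nonneg
        (fun i _ => Finset.sum_nonneg fun j _ => sq_nonneg _)]
      constructor
      · intro h i hi j hj
        have h2 := (Finset.sum_eq_zero_iff_of_nonneg
          (fun j _ => sq_nonneg (X i j - dB n B i j))).mp
          (h i (Finset.mem_range.mpr hi)) j (Finset.mem_range.mpr hj)
        have := sq_eq_zero_iff.mp h2
        linarith
      · intro h i hi
        apply Finset.sum_eq_zero
        intro j hj
        rw [h i (Finset.mem_range.mp hi) j (Finset.mem_range.mp hj)]
        ring
    have hRowiff : SA = n ↔ RowDW n n A := by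
      rw [hSAiff]
      unfold RowDW
      constructor <;> intro h i hi
      · exact (bridgeA n hn A i).mp (((hrowA i hi).2).mp (h i hi))
      · exact ((hrowA i hi).2).mpr ((bridgeA n hn A i).mpr (h i hi))
    have hColiff : SB = n ↔ ColDW n n B := by
      rw [hSBiff]
      unfold ColDW
      constructor <;> intro h j hj
      · exact (bridgeB n hn B j).mp (((hcolB j hj).2).mp (h j hj))
      · exact ((hcolB j hj).2).mpr ((bridgeB n hn B j).mpr (h j hj))
    rw [hRowiff, hColiff, hS1iff, hS2iff]
    constructor
    · rintro ⟨hR, hC, hxa, hxb⟩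
      exact ⟨hR, hC, fun i hi j hj => by rw [← hxa i hi j hj, hxb i hi j hj],
        hxa⟩
    · rintro ⟨hR, hC, hab, hxa⟩
      exact ⟨hR, hC, hxa,
        fun i hi j hj => by rw [hxa i hi j hj, hab i hi j hj]⟩
end
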